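/- arXiv:2603.03262 — 2 statements merged into one kernel-verified Lean document; each statement's English description precedes it below -/
import Mathlib

section
/- (Yeo's Theorem) If G is a non-empty finite undirected loopless multigraph equipped with an edge-coloring and having no alternating cycle, then there exists a vertex v of G such that no connected component of G−v is joined to v by edges of more than one color; that is, for each connected component D of G−v, all edges of G between v and vertices of D have the same color. -/
/-- A finite undirected multigraph without loops: each edge is incident to
exactly two distinct endpoints. -/
structure Multigraph (V : Type) (E : Type) where
  inc : E → V → Prop
  exists_two : ∀ e : E, ∃ a b : V, a ≠ b ∧ ∀ w : V, inc e w ↔ (w = a ∨ w = b)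

namespace Multigraph

variable {V E C : Type}

/-- A path (walk) in a multigraph: an alternating sequence of vertices and
edges such that the endpoints of the `i`-th edge are exactly the `i`-th and
`(i+1)`-th vertices. -/
structure Walk (G : Multigraph V E) where
  len : ℕ
  vert : Fin (len + 1) → V
  edge : Fin len → E
  incs : ∀ (i : ℕ) (h : i < len), ∀ w : V,
    G.inc (edge ⟨i, h⟩) w ↔ (w = vert ⟨i, by omega⟩ ∨ w = vert ⟨i + 1, by omega⟩)

variable {G : Multigraph V E}

namespace Walk

/-- The source (first vertex) of a path. -/
def src (p : G.Walk) : V := p.vert ⟨0, by omega⟩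

/-- The target (last vertex) of a path. -/
def tgt (p : G.Walk) : V := p.vert ⟨p.len, by omega⟩

def IsClosed (p : G.Walk) : Prop := p.src = p.tgt

def IsOpen (p : G.Walk) : Prop := p.src ≠ p.tgt

/-- A path is simple when its edges are pairwise distinct and its vertices are
pairwise distinct, except that its two endpoints may coincide. -/
def IsSimple (p : G.Walk) : Prop :=
  (∀ (i j : ℕ) (hi : i < p.len) (hj : j < p.len),
      p.edge ⟨i, hi⟩ = p.edge ⟨j, hj⟩ → i = j) ∧
  (∀ (i j : ℕ) (hi : i < p.len + 1) (hj : j < p.len + 1), i < j →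
      p.vert ⟨i, hi⟩ = p.vert ⟨j, hj⟩ → i = 0 ∧ j = p.len)

/-- A cycle is a non-empty simple closed path. -/
def IsCycle (p : G.Walk) : Prop := p.IsSimple ∧ p.IsClosed ∧ 0 < p.len

/-- `x` occurs as a vertex of `p`. -/
def MemV (p : G.Walk) (x : V) : Prop := ∃ (i : ℕ) (h : i < p.len + 1), p.vert ⟨i, h⟩ = x

/-- `e` occurs as an edge of `p`. -/
def MemE (p : G.Walk) (e : E) : Prop := ∃ (i : ℕ) (h : i < p.len), p.edge ⟨i, h⟩ = e

/-- With respect to a local coloring `c`, the path `p` has a cusp at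
vertex-position `j`, at vertex `u`, with color `α`: either an internal cusp
(two consecutive distinct edges with the same color at their middle vertex),
or -- when `j = 0` and `p` is closed -- the cusp formed by its last edge, its
source and its first edge. -/
def CuspAt (c : E → V → C) (p : G.Walk) (j : ℕ) (u : V) (α : C) : Prop :=
  (∃ (h1 : 0 < j) (h2 : j < p.len),
      p.vert ⟨j, by omega⟩ = u ∧
      p.edge ⟨j - 1, by omega⟩ ≠ p.edge ⟨j, h2⟩ ∧
      c (p.edge ⟨j - 1, by omega⟩) u = α ∧ c (p.edge ⟨j, h2⟩) u = α) ∨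
  (j = 0 ∧ p.IsClosed ∧ p.src = u ∧
    ∃ h : 0 < p.len,
      p.edge ⟨p.len - 1, by omega⟩ ≠ p.edge ⟨0, h⟩ ∧
      c (p.edge ⟨p.len - 1, by omega⟩) u = α ∧ c (p.edge ⟨0, h⟩) u = α)

/-- `p` has a cusp at vertex-position `j`. -/
def CuspIdx (c : E → V → C) (p : G.Walk) (j : ℕ) : Prop := ∃ u α, p.CuspAt c j u α

/-- `p` has a cusp whose vertex is `u`. -/
def HasCuspAtV (c : E → V → C) (p : G.Walk) (u : V) : Prop := ∃ j α, p.CuspAt c j u α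

/-- A cusp-free (alternating) path. -/
def CuspFree (c : E → V → C) (p : G.Walk) : Prop := ∀ j : ℕ, ¬ p.CuspIdx c j

/-- The number of cusps of a path. -/
noncomputable def cuspCount (c : E → V → C) (p : G.Walk) : ℕ :=
  {j : ℕ | p.CuspIdx c j}.ncard

/-- The starting color of `p` is not `α`. -/
def StartColorNe (c : E → V → C) (p : G.Walk) (α : C) : Prop :=
  ∀ h : 0 < p.len, c (p.edge ⟨0, h⟩) p.src ≠ α

/-- `p` is non-empty and its ending color is `β`. -/
def EndColorIs (c : E → V → C) (p : G.Walk) (β : C) : Prop :=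
  ∃ h : 0 < p.len, c (p.edge ⟨p.len - 1, by omega⟩) p.tgt = β

/-- `q` is a (contiguous) sub-path of `p`. -/
def IsSubpathOf (q p : G.Walk) : Prop :=
  ∃ (k : ℕ) (hk : k + q.len ≤ p.len),
    (∀ (i : ℕ) (hi : i < q.len + 1), q.vert ⟨i, hi⟩ = p.vert ⟨k + i, by omega⟩) ∧
    (∀ (i : ℕ) (hi : i < q.len), q.edge ⟨i, hi⟩ = p.edge ⟨k + i, by omega⟩)

/-- `r` is the path `p` extended (at its end) by the edge `e` to the vertex `l`;
that is, `r = p · (tgt p, e, l)`. -/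
def ExtendsBy (r p : G.Walk) (e : E) (l : V) : Prop :=
  ∃ hlen : r.len = p.len + 1,
    (∀ (i : ℕ) (hi : i < p.len + 1), r.vert ⟨i, by omega⟩ = p.vert ⟨i, hi⟩) ∧
    (∀ (i : ℕ) (hi : i < p.len), r.edge ⟨i, by omega⟩ = p.edge ⟨i, hi⟩) ∧
    r.edge ⟨p.len, by omega⟩ = e ∧ r.vert ⟨p.len + 1, by omega⟩ = l

/-- `r` is the path obtained by prefixing `p` with the edge `e`;
that is, `r = (src r, e, src p) · p`. -/
def ConsOf (r : G.Walk) (e : E) (p : G.Walk) : Prop :=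
  ∃ hlen : r.len = p.len + 1,
    r.edge ⟨0, by omega⟩ = e ∧
    (∀ (i : ℕ) (hi : i < p.len + 1), r.vert ⟨i + 1, by omega⟩ = p.vert ⟨i, hi⟩) ∧
    (∀ (i : ℕ) (hi : i < p.len), r.edge ⟨i + 1, by omega⟩ = p.edge ⟨i, hi⟩)

end Walk

/-- `(v, α)` is a cusp-point: two distinct edges incident to `v` both have
color `α` at `v`. -/
def IsCuspPoint (G : Multigraph V E) (c : E → V → C) (v : V) (α : C) : Prop :=
  ∃ e f : E, e ≠ f ∧ G.inc e v ∧ G.inc f v ∧ c e v = α ∧ c f v = α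

/-- `(v, α) ⇝_p (u, β)`: `p` is a simple open cusp-free path from `v` to `u`
whose starting color is not `α` and whose ending color is `β`. -/
def StepsTo (G : Multigraph V E) (c : E → V → C) (v : V) (α : C) (u : V) (β : C)
    (p : G.Walk) : Prop :=
  p.IsSimple ∧ p.IsOpen ∧ p.CuspFree c ∧ p.src = v ∧ p.tgt = u ∧
    p.StartColorNe c α ∧ p.EndColorIs c β

/-- `(v, α) ⇝ (u, β)`. -/
def Steps (G : Multigraph V E) (c : E → V → C) (v : V) (α : C) (u : V) (β : C) : Prop :=
  ∃ p : G.Walk, G.StepsTo c v α u β p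

/-- `(v, α) ⊳_p (u, β)`: `(v, α) ⇝_p (u, β)` and no `⇝`-path from `(u, β)`
ends on a vertex of `p`. -/
def TriPath (G : Multigraph V E) (c : E → V → C) (v : V) (α : C) (u : V) (β : C)
    (p : G.Walk) : Prop :=
  G.StepsTo c v α u β p ∧
    ∀ (x : V) (τ : C) (q : G.Walk), G.StepsTo c u β x τ q → ¬ p.MemV x

/-- `(v, α) ⊳ (u, β)`. -/
def Tri (G : Multigraph V E) (c : E → V → C) (v : V) (α : C) (u : V) (β : C) : Prop :=
  ∃ p : G.Walk, G.TriPath c v α u β p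

/-- A splitting vertex: every cycle containing `v` has a cusp at `v`. -/
def IsSplitting (G : Multigraph V E) (c : E → V → C) (v : V) : Prop :=
  ∀ ω : G.Walk, ω.IsCycle → ω.MemV v → ω.HasCuspAtV c v

/-- A set `P` of vertex-color pairs dominates cusp-points. -/
def Dominates (G : Multigraph V E) (c : E → V → C) (P : Set (V × C)) : Prop :=
  ∀ (v : V) (α : C), G.IsCuspPoint c v α →
    (v, α) ∈ P ∨ ∃ (u : V) (β : C), (u, β) ∈ P ∧ G.Tri c v α u β

/-- `𝔐(v)`: the set of cycles with source `v`, whose last and first edges do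
not make a cusp at `v`, with a minimal number of cusps among such cycles. -/
def MinCycles (G : Multigraph V E) (c : E → V → C) (v : V) : Set G.Walk :=
  {ω | ω.IsCycle ∧ ω.src = v ∧ ¬ ω.CuspIdx c 0 ∧
    ∀ ω' : G.Walk, ω'.IsCycle → ω'.src = v → ¬ ω'.CuspIdx c 0 →
      ω.cuspCount c ≤ ω'.cuspCount c}

/-- The one-edge path `(v, e, u)`. -/
def singleWalk (G : Multigraph V E) (e : E) (v u : V)
    (hends : ∀ w : V, G.inc e w ↔ w = v ∨ w = u) : G.Walk where
  len := 1
  vert := fun i => if (i : ℕ) = 0 then v else u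
  edge := fun _ => e
  incs := by
    intro i h w
    have hi : i = 0 := by omega
    subst hi
    simpa using hends w

/-- An alternating cycle with respect to an edge-coloring: a cycle whose
consecutive edges (including last and first) have different colors. -/
def Walk.IsAlternatingCycle (c : E → C) (p : G.Walk) : Prop :=
  p.IsCycle ∧
  (∀ (i : ℕ) (h : i + 1 < p.len), c (p.edge ⟨i, by omega⟩) ≠ c (p.edge ⟨i + 1, h⟩)) ∧
  (∀ h : 0 < p.len, c (p.edge ⟨p.len - 1, by omega⟩) ≠ c (p.edge ⟨0, h⟩))

/-- `a` and `b` are connected in `G − v` (by a path avoiding `v`). -/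
def ReachAvoiding (G : Multigraph V E) (v a b : V) : Prop :=
  ∃ p : G.Walk, p.src = a ∧ p.tgt = b ∧
    ∀ (i : ℕ) (h : i < p.len + 1), p.vert ⟨i, h⟩ ≠ v

/-- A perfect matching: every vertex is incident to exactly one edge of `F`. -/
def IsPerfectMatching (G : Multigraph V E) (F : Set E) : Prop :=
  ∀ v : V, ∃! e : E, e ∈ F ∧ G.inc e v

/-- A bridge: an edge contained in no cycle. -/
def IsBridge (G : Multigraph V E) (e : E) : Prop :=
  ¬ ∃ ω : G.Walk, ω.IsCycle ∧ ω.MemE e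

/-- A `φ`-conformal cycle: a cycle `ω` such that `φ x` is an edge of `ω`
for every vertex `x` of `ω`. -/
def ConformalCycle (G : Multigraph V E) (φ : V → E) (ω : G.Walk) : Prop :=
  ω.IsCycle ∧ ∀ x : V, ω.MemV x → ω.MemE (φ x)

/-- A sub-graph: sets of vertices and edges, each edge having its endpoints
among the vertices. -/
structure Subgraph (G : Multigraph V E) where
  verts : Set V
  edges : Set E
  edge_mem : ∀ e ∈ edges, ∀ w : V, G.inc e w → w ∈ verts

/-- The walk `p` lies inside the sub-graph `S`. -/
def Walk.InSub (p : G.Walk) (S : G.Subgraph) : Prop :=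
  (∀ (i : ℕ) (h : i < p.len + 1), p.vert ⟨i, h⟩ ∈ S.verts) ∧
  (∀ (i : ℕ) (h : i < p.len), p.edge ⟨i, h⟩ ∈ S.edges)

/-- `S` is `⇝`-connected: any two distinct vertices of `S` are related by `⇝`
along a path inside `S`, for any starting color constraint. -/
def Subgraph.StepConnected (c : E → V → C) (S : G.Subgraph) : Prop :=
  ∀ v ∈ S.verts, ∀ u ∈ S.verts, v ≠ u → ∀ α : C,
    ∃ (p : G.Walk) (β : C), p.InSub S ∧ G.StepsTo c v α u β p

/-- `S` is connected: non-empty, and any two of its vertices are joined by a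
path lying inside it. -/
def Subgraph.IsConnected (S : G.Subgraph) : Prop :=
  (S.verts.Nonempty ∨ S.edges.Nonempty) ∧
  ∀ a ∈ S.verts, ∀ b ∈ S.verts,
    ∃ p : G.Walk, p.InSub S ∧ p.src = a ∧ p.tgt = b

/-- The sub-graph consisting of the vertices and edges of a walk. -/
def Walk.toSub (p : G.Walk) : G.Subgraph where
  verts := {x | p.MemV x}
  edges := {e | p.MemE e}
  edge_mem := by
    rintro e ⟨i, h, rfl⟩ w hw
    rw [p.incs i h w] at hw
    rcases hw with h' | h'
    · exact ⟨i, by omega, h'.symm⟩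
    · exact ⟨i + 1, by omega, h'.symm⟩

/-- Union of sub-graphs. -/
def Subgraph.union (S R : G.Subgraph) : G.Subgraph where
  verts := S.verts ∪ R.verts
  edges := S.edges ∪ R.edges
  edge_mem := by
    rintro e (he | he) w hw
    · exact Or.inl (S.edge_mem e he w hw)
    · exact Or.inr (R.edge_mem e he w hw)

/-- Inclusion of sub-graphs. -/
def Subgraph.le (S T : G.Subgraph) : Prop := S.verts ⊆ T.verts ∧ S.edges ⊆ T.edges

/-- `S` is a union of cusp-free cycles. -/
def IsCuspFreeCycleUnion (G : Multigraph V E) (c : E → V → C) (S : G.Subgraph) : Prop :=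
  ∃ F : Set G.Walk, (∀ ω ∈ F, Walk.IsCycle ω ∧ Walk.CuspFree c ω) ∧
    S.verts = {x | ∃ ω ∈ F, Walk.MemV ω x} ∧
    S.edges = {e | ∃ ω ∈ F, Walk.MemE ω e}

/-- `𝕺`: the set of maximal connected unions of cusp-free cycles. -/
def MaxCFCU (G : Multigraph V E) (c : E → V → C) : Set (G.Subgraph) :=
  {S | G.IsCuspFreeCycleUnion c S ∧ S.IsConnected ∧
    ∀ T : G.Subgraph, G.IsCuspFreeCycleUnion c T → T.IsConnected → S.le T → T.le S}

end Multigraph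

/-- A finite directed loopless multigraph. -/
structure DirMultigraph (V : Type) (E : Type) where
  srcE : E → V
  tgtE : E → V
  ne : ∀ e : E, srcE e ≠ tgtE e

/-- The underlying undirected multigraph of a directed multigraph. -/
def DirMultigraph.toMultigraph {V E : Type} (D : DirMultigraph V E) : Multigraph V E where
  inc e w := w = D.srcE e ∨ w = D.tgtE e
  exists_two e := ⟨D.srcE e, D.tgtE e, D.ne e, fun _ => Iff.rfl⟩

/-- `v` is a turning vertex of the cycle `ω`: the two edges incident to `v`
in `ω` either both have source `v` or both have target `v`. -/
def DirMultigraph.TurningAt {V E : Type} (D : DirMultigraph V E)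
    (ω : D.toMultigraph.Walk) (v : V) : Prop :=
  (∃ (j : ℕ) (h1 : 0 < j) (h2 : j < ω.len),
      ω.vert ⟨j, by omega⟩ = v ∧
      ((D.srcE (ω.edge ⟨j - 1, by omega⟩) = v ∧ D.srcE (ω.edge ⟨j, h2⟩) = v) ∨
       (D.tgtE (ω.edge ⟨j - 1, by omega⟩) = v ∧ D.tgtE (ω.edge ⟨j, h2⟩) = v))) ∨
  (Multigraph.Walk.IsClosed ω ∧ Multigraph.Walk.src ω = v ∧
    ∃ h : 0 < ω.len,
      ((D.srcE (ω.edge ⟨ω.len - 1, by omega⟩) = v ∧ D.srcE (ω.edge ⟨0, h⟩) = v) ∨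
       (D.tgtE (ω.edge ⟨ω.len - 1, by omega⟩) = v ∧ D.tgtE (ω.edge ⟨0, h⟩) = v)))

/- ========= Auxiliary development for the proof of Yeo's theorem ========= -/

namespace YeoAux

open List

variable {V E C : Type}

/-- Steps of a list-walk: (edge, next vertex) pairs. -/
abbrev Stp (V E : Type) := List (E × V)

/-- `LW G a s`: `s` is a walk starting at `a`. -/
def LW (G : Multigraph V E) : V → Stp V E → Prop
  | _, [] => True
  | a, st :: s => (∀ w, G.inc st.1 w ↔ w = a ∨ w = st.2) ∧ LW G st.2 s

/-- Final vertex of a walk. -/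
def endV (a : V) (s : Stp V E) : V := (s.map Prod.snd).getLastD a

/-- Vertex list of a walk. -/
def vs (a : V) (s : Stp V E) : List V := a :: s.map Prod.snd

/-- Edge list of a walk. -/
def es (s : Stp V E) : List E := s.map Prod.fst

@[simp] lemma LW_nil {G : Multigraph V E} {a : V} : LW G a ([] : Stp V E) := trivial

@[simp] lemma LW_cons {G : Multigraph V E} {a : V} {st : E × V} {s : Stp V E} :
    LW G a (st :: s) ↔ (∀ w, G.inc st.1 w ↔ w = a ∨ w = st.2) ∧ LW G st.2 s := Iff.rfl

@[simp] lemma endV_nil (a : V) : endV a ([] : Stp V E) = a := rfl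

@[simp] lemma endV_cons (a : V) (st : E × V) (s : Stp V E) :
    endV a (st :: s) = endV st.2 s :=
  List.getLastD_cons

@[simp] lemma vs_nil (a : V) : vs a ([] : Stp V E) = [a] := rfl

@[simp] lemma vs_cons (a : V) (st : E × V) (s : Stp V E) :
    vs a (st :: s) = a :: vs st.2 s := rfl

@[simp] lemma es_nil : es ([] : Stp V E) = [] := rfl

@[simp] lemma es_cons (st : E × V) (s : Stp V E) : es (st :: s) = st.1 :: es s := rfl

@[simp] lemma es_append (s t : Stp V E) : es (s ++ t) = es s ++ es t := by
  simp [es]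

lemma vs_append (a : V) (s t : Stp V E) : vs a (s ++ t) = vs a s ++ t.map Prod.snd := by
  simp [vs]

lemma endV_append (a : V) (s t : Stp V E) : endV a (s ++ t) = endV (endV a s) t := by
  induction s generalizing a with
  | nil => simp
  | cons st s ih => simp [ih]

lemma LW_append {G : Multigraph V E} {a : V} {s t : Stp V E} :
    LW G a (s ++ t) ↔ LW G a s ∧ LW G (endV a s) t := by
  induction s generalizing a with
  | nil => simp
  | cons st s ih => simp [ih]; tauto

lemma endV_mem {a : V} {s : Stp V E} (h : s ≠ []) : endV a s ∈ s.map Prod.snd := by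
  induction s generalizing a with
  | nil => exact absurd rfl h
  | cons st s ih =>
    rcases eq_or_ne s [] with rfl | hs
    · simp [endV]
    · simp only [endV_cons, List.map_cons, List.mem_cons]
      exact Or.inr (ih hs)

lemma endV_mem_vs (a : V) (s : Stp V E) : endV a s ∈ vs a s := by
  rcases eq_or_ne s [] with rfl | hs
  · simp [vs]
  · exact List.mem_cons_of_mem _ (endV_mem hs)

/-- Endpoints of any edge of a walk are among its vertices. -/
lemma LW.mem_of_inc {G : Multigraph V E} {a : V} {s : Stp V E} (h : LW G a s)
    {st : E × V} (hst : st ∈ s) {w : V} (hw : G.inc st.1 w) : w ∈ vs a s := by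
  induction s generalizing a with
  | nil => simp at hst
  | cons st' s ih =>
    rcases List.mem_cons.1 hst with rfl | hst
    · rcases (h.1 w).1 hw with rfl | rfl
      · simp [vs]
      · exact List.mem_cons_of_mem _ (by simp [vs])
    · exact List.mem_cons_of_mem _ (ih h.2 hst)

/-- Characterization of the i-th vertex / edge relation, used for conversion to `Walk`. -/
lemma LW.inc_get {G : Multigraph V E} {a : V} {s : Stp V E} (h : LW G a s) :
    ∀ (i : ℕ) (hi : i < s.length), ∀ w,
      G.inc (s.get ⟨i, hi⟩).1 w ↔
        w = (vs a s).get ⟨i, by simp [vs]; omega⟩ ∨ w = (vs a s).get ⟨i + 1, by simp [vs]; omega⟩ := by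
  induction s generalizing a with
  | nil => intro i hi; simp at hi
  | cons st s ih =>
    intro i hi w
    cases i with
    | zero => simpa [vs] using h.1 w
    | succ j =>
      have := ih h.2 j (by simpa using hi) w
      simpa [vs] using this

/-- In a vertex-nodup walk, edges are pairwise distinct. -/
lemma LW.es_nodup {G : Multigraph V E} {a : V} {s : Stp V E} (h : LW G a s)
    (hnd : (vs a s).Nodup) : (es s).Nodup := by
  induction s generalizing a with
  | nil => simp
  | cons st s ih =>
    simp only [es_cons, List.nodup_cons]
    have hnd' : (vs st.2 s).Nodup := (List.nodup_cons.1 hnd).2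
    refine ⟨?_, ih h.2 hnd'⟩
    intro hmem
    obtain ⟨st', hst', hfst⟩ : ∃ st' ∈ s, st'.1 = st.1 := by
      simpa [es, List.mem_map] using hmem
    have : a ∈ vs st.2 s := h.2.mem_of_inc hst' (by rw [hfst]; exact (h.1 a).2 (Or.inl rfl))
    exact (List.nodup_cons.1 hnd).1 this

/-- Reversal of a walk. -/
def rev (a : V) : Stp V E → Stp V E
  | [] => []
  | (e, b) :: s => rev b s ++ [(e, a)]

@[simp] lemma rev_nil (a : V) : rev a ([] : Stp V E) = [] := rfl

@[simp] lemma rev_cons (a : V) (e : E) (b : V) (s : Stp V E) :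
    rev a ((e, b) :: s) = rev b s ++ [(e, a)] := rfl

lemma endV_rev (a : V) (s : Stp V E) : endV (endV a s) (rev a s) = a := by
  induction s generalizing a with
  | nil => simp
  | cons st s ih =>
    obtain ⟨e, b⟩ := st
    simp only [rev_cons, endV_cons, endV_append, ih b]
    simp [endV]

lemma LW.rev {G : Multigraph V E} {a : V} {s : Stp V E} (h : LW G a s) :
    LW G (endV a s) (YeoAux.rev a s) := by
  induction s generalizing a with
  | nil => simp
  | cons st s ih =>
    obtain ⟨e, b⟩ := st
    simp only [rev_cons, endV_cons]
    rw [LW_append]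
    refine ⟨ih h.2, ?_, trivial⟩
    rw [endV_rev]
    intro w; rw [h.1 w]; tauto

@[simp] lemma es_rev (a : V) (s : Stp V E) : es (rev a s) = (es s).reverse := by
  induction s generalizing a with
  | nil => simp
  | cons st s ih => obtain ⟨e, b⟩ := st; simp [ih b]

lemma vs_rev (a : V) (s : Stp V E) : vs (endV a s) (rev a s) = (vs a s).reverse := by
  induction s generalizing a with
  | nil => simp [vs]
  | cons st s ih =>
    obtain ⟨e, b⟩ := st
    simp only [vs_cons, rev_cons, endV_cons, List.reverse_cons]
    rw [vs_append, ← ih b]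
    simp [vs]

end YeoAux

namespace YeoAux

open List

open scoped Classical

variable {V E C : Type}

/-- Number of adjacent same-color pairs ("cusps") in an edge list. -/
noncomputable def cN (c : E → C) : List E → ℕ
  | [] => 0
  | [_] => 0
  | e :: f :: l => (if c e = c f then 1 else 0) + cN c (f :: l)

/-- Junction cusp count between two edge lists. -/
noncomputable def jn (c : E → C) (A B : List E) : ℕ :=
  if ∃ e ∈ A.getLast?, ∃ f ∈ B.head?, c e = c f then 1 else 0

@[simp] lemma cN_nil (c : E → C) : cN c [] = 0 := rfl
@[simp] lemma cN_single (c : E → C) (e : E) : cN c [e] = 0 := rfl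
lemma cN_cons_cons (c : E → C) (e f : E) (l : List E) :
    cN c (e :: f :: l) = (if c e = c f then 1 else 0) + cN c (f :: l) := by
  simp [cN]

@[simp] lemma jn_nil_left (c : E → C) (B : List E) : jn c [] B = 0 := by simp [jn]
@[simp] lemma jn_nil_right (c : E → C) (A : List E) : jn c A [] = 0 := by simp [jn]

lemma jn_cons_right (c : E → C) (A : List E) (f : E) (B : List E) :
    jn c A (f :: B) = jn c A [f] := by
  simp [jn]

lemma jn_cons_left (c : E → C) (e f : E) (A B : List E) :
    jn c (e :: f :: A) B = jn c (f :: A) B := by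
  simp [jn, List.getLast?_cons_cons]

lemma jn_single_left (c : E → C) (e f : E) (B : List E) :
    jn c [e] (f :: B) = if c e = c f then 1 else 0 := by
  simp [jn]

lemma cN_append (c : E → C) (A B : List E) :
    cN c (A ++ B) = cN c A + jn c A B + cN c B := by
  induction A with
  | nil => simp
  | cons e A ih =>
    cases A with
    | nil =>
      cases B with
      | nil => simp
      | cons f B' => simp [cN_cons_cons, jn_single_left]
    | cons f l =>
      rw [show (e :: f :: l) ++ B = e :: f :: (l ++ B) from rfl, cN_cons_cons,
        show f :: (l ++ B) = (f :: l) ++ B from rfl, ih, cN_cons_cons, jn_cons_left]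
      omega

lemma cN_append_zero {c : E → C} {A B : List E} (h : cN c (A ++ B) = 0) :
    cN c A = 0 ∧ jn c A B = 0 ∧ cN c B = 0 := by
  rw [cN_append] at h; omega

lemma jn_le_one (c : E → C) (A B : List E) : jn c A B ≤ 1 := by
  unfold jn; split <;> simp

/-- First-cusp decomposition. -/
lemma cN_pos_split {c : E → C} {L : List E} (h : 0 < cN c L) :
    ∃ A B, L = A ++ B ∧ A ≠ [] ∧ B ≠ [] ∧ cN c A = 0 ∧ jn c A B = 1 := by
  induction L with
  | nil => simp at h
  | cons e L ih =>
    cases L with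
    | nil => simp at h
    | cons f l =>
      by_cases hef : c e = c f
      · exact ⟨[e], f :: l, rfl, by simp, by simp, rfl, by simp [jn_single_left, hef]⟩
      · have h' : 0 < cN c (f :: l) := by
          rw [cN_cons_cons] at h; simp [hef] at h; omega
        obtain ⟨A, B, hLB, hA, hB, hcA, hj⟩ := ih h'
        refine ⟨e :: A, B, by simp [hLB], by simp, hB, ?_, ?_⟩
        · -- cN (e :: A) = 0
          cases A with
          | nil => exact absurd rfl hA
          | cons a A' =>
            have hfa : a = f := by
              have := hLB; simp at this; exact this.1.symm
            rw [cN_cons_cons]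
            subst hfa
            simp [hef, hcA]
        · cases A with
          | nil => exact absurd rfl hA
          | cons a A' => rw [jn_cons_left]; exact hj

lemma cN_zero_ne {c : E → C} {l : List E} (h : cN c l = 0) :
    ∀ (i : ℕ) (hi : i + 1 < l.length),
      c (l.get ⟨i, by omega⟩) ≠ c (l.get ⟨i + 1, hi⟩) := by
  induction l with
  | nil => intro i hi; simp at hi
  | cons e l ih =>
    intro i hi
    cases l with
    | nil => simp at hi
    | cons f l' =>
      rw [cN_cons_cons] at h
      cases i with
      | zero =>
        intro hc; simp at hc; simp [hc] at h
      | succ j =>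
        have h' : cN c (f :: l') = 0 := by omega
        have := ih h' j (by simpa using hi)
        simpa using this

/-- Splitting a steps list at the list level given its edge list decomposition. -/
lemma split_of_es_eq {s : Stp V E} {A B : List E} (h : es s = A ++ B) :
    ∃ s₁ s₂, s = s₁ ++ s₂ ∧ es s₁ = A ∧ es s₂ = B := by
  induction s generalizing A with
  | nil =>
    cases A with
    | nil => exact ⟨[], [], by simp, rfl, by simpa using h⟩
    | cons a A' => simp [es] at h
  | cons st s ih =>
    cases A with
    | nil => exact ⟨[], st :: s, rfl, rfl, by simpa using h⟩
    | cons a A' =>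
      simp only [es_cons, List.cons_append, List.cons.injEq] at h
      obtain ⟨s₁, s₂, rfl, h1, h2⟩ := ih h.2
      exact ⟨st :: s₁, s₂, rfl, by simp [h.1, h1], h2⟩

/-- First hit of a predicate among the successive vertices of a walk. -/
lemma first_hit {a : V} {s : Stp V E} (P : V → Prop) [DecidablePred P]
    (h : ∃ w ∈ s.map Prod.snd, P w) :
    ∃ s₁ s₂, s = s₁ ++ s₂ ∧ s₁ ≠ [] ∧ P (endV a s₁) ∧
      ∀ w ∈ (s₁.map Prod.snd).dropLast, ¬ P w := by
  induction s generalizing a with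
  | nil => simp at h
  | cons st s ih =>
    by_cases hP : P st.2
    · exact ⟨[st], s, rfl, by simp, by simpa [endV] using hP, by simp⟩
    · have h' : ∃ w ∈ s.map Prod.snd, P w := by
        obtain ⟨w, hw, hPw⟩ := h
        simp at hw
        rcases hw with rfl | hw
        · exact absurd hPw hP
        · exact ⟨w, by simpa using hw, hPw⟩
      obtain ⟨s₁, s₂, rfl, hne, hend, hnot⟩ := ih (a := st.2) h'
      refine ⟨st :: s₁, s₂, rfl, by simp, by simpa using hend, ?_⟩
      intro w hw
      have : (map Prod.snd (st :: s₁)).dropLast = st.2 :: (map Prod.snd s₁).dropLast := by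
        rw [List.map_cons, List.dropLast_cons_of_ne_nil]
        simpa using hne
      rw [this] at hw
      rcases List.mem_cons.1 hw with rfl | hw
      · exact hP
      · exact hnot w hw

/-- An edge of a nodup walk incident to the start must be the first edge. -/
lemma LW.inc_start_head {G : Multigraph V E} {a : V} {s : Stp V E} (h : LW G a s)
    (hnd : (vs a s).Nodup) {g : E} (hg : G.inc g a) (hmem : g ∈ es s) :
    (es s).head? = some g := by
  cases s with
  | nil => simp at hmem
  | cons st t =>
    rcases List.mem_cons.1 hmem with rfl | hmem'
    · rfl
    · exfalso
      obtain ⟨st', hst', rfl⟩ : ∃ st' ∈ t, st'.1 = g := by simpa [es] using hmem'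
      have : a ∈ vs st.2 t := h.2.mem_of_inc hst' hg
      exact (List.nodup_cons.1 (by simpa [vs] using hnd)).1 this

/-- An edge of a nodup walk incident to the final vertex must be the last edge. -/
lemma LW.inc_end_last {G : Multigraph V E} {a : V} {s : Stp V E} (h : LW G a s)
    (hnd : (vs a s).Nodup) {g : E} (hg : G.inc g (endV a s)) (hmem : g ∈ es s) :
    (es s).getLast? = some g := by
  induction s generalizing a with
  | nil => simp at hmem
  | cons st t ih =>
    cases t with
    | nil =>
      simp [es] at hmem
      simp [es, hmem]
    | cons st' t' =>
      rcases List.mem_cons.1 hmem with rfl | hmem'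
      · exfalso
        have hend : endV a (st :: st' :: t') = endV st.2 (st' :: t') := by simp
        rw [hend] at hg
        have hnd1 : a ∉ vs st.2 (st' :: t') := (List.nodup_cons.1 (by simpa [vs] using hnd)).1
        rcases (h.1 _).1 hg with hEq | hEq
        · exact hnd1 (hEq ▸ endV_mem_vs _ _)
        · -- endV st.2 (st'::t') = st.2, but endV ∈ map snd (st'::t') and st.2 ∉ it
          have hmm : endV st.2 (st' :: t') ∈ (st' :: t').map Prod.snd := endV_mem (by simp)
          rw [hEq] at hmm
          have : (vs st.2 (st' :: t')).Nodup := (List.nodup_cons.1 (by simpa [vs] using hnd)).2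
          exact (List.nodup_cons.1 (by simpa [vs] using this)).1 hmm
      · have hnd' : (vs st.2 (st' :: t')).Nodup := (List.nodup_cons.1 (by simpa [vs] using hnd)).2
        have hg' := ih h.2 hnd' (by simpa using hg) hmem'
        show (st.1 :: st'.1 :: es t').getLast? = some g
        rw [List.getLast?_cons_cons]
        exact hg'

/-- Extraction of a vertex-simple walk with the same endpoints. -/
lemma extract_simple {G : Multigraph V E} :
    ∀ (n : ℕ) (s : Stp V E) (a : V), s.length ≤ n → LW G a s →
    ∃ t, LW G a t ∧ endV a t = endV a s ∧ (vs a t).Nodup ∧ ∀ w ∈ vs a t, w ∈ vs a s := by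
  intro n
  induction n with
  | zero =>
    intro s a hs _
    have : s = [] := List.length_eq_zero_iff.1 (Nat.le_zero.1 hs)
    subst this
    exact ⟨[], trivial, rfl, by simp [vs], by simp⟩
  | succ n ih =>
    intro s a hs hlw
    by_cases ha : a ∈ s.map Prod.snd
    · classical
      obtain ⟨s₁, s₂, rfl, hne, hend, _⟩ := first_hit (a := a) (· = a) ⟨a, ha, rfl⟩
      have hlw₂ : LW G a s₂ := by
        have := (LW_append.1 hlw).2
        rwa [hend] at this
      have hlen : s₂.length ≤ n := by
        have := (List.length_append : (s₁ ++ s₂).length = _)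
        have h1 : 1 ≤ s₁.length := List.length_pos_iff.2 hne
        omega
      obtain ⟨t, h1, h2, h3, h4⟩ := ih s₂ a hlen hlw₂
      refine ⟨t, h1, ?_, h3, ?_⟩
      · rw [endV_append, hend, h2]
      · intro w hw
        have := h4 w hw
        rcases List.mem_cons.1 this with rfl | hmem
        · simp [vs]
        · simp only [vs, List.mem_cons, vs_append]
          right
          rw [List.map_append]
          exact List.mem_append_right _ hmem
    · cases s with
      | nil => exact ⟨[], trivial, rfl, by simp [vs], by simp⟩
      | cons st s' =>
        obtain ⟨t, h1, h2, h3, h4⟩ := ih s' st.2 (by simpa using hs) hlw.2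
        refine ⟨st :: t, ⟨hlw.1, h1⟩, by simpa using h2, ?_, ?_⟩
        · rw [show vs a (st :: t) = a :: vs st.2 t from rfl, List.nodup_cons]
          refine ⟨fun hmem => ?_, h3⟩
          have := h4 a hmem
          rcases List.mem_cons.1 this with rfl | hmem'
          · exact ha (by simp)
          · exact ha (by simp [hmem'])
        · intro w hw
          rcases List.mem_cons.1 hw with rfl | hw'
          · simp [vs]
          · have := h4 w hw'
            rcases List.mem_cons.1 this with rfl | hmem'
            · simp [vs]
            · simp only [vs, List.map_cons, List.mem_cons]
              tauto

end YeoAux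

namespace YeoAux

open List Multigraph

open scoped Classical

variable {V E C : Type}

@[simp] lemma length_vs (a : V) (s : Stp V E) : (vs a s).length = s.length + 1 := by simp [vs]
@[simp] lemma length_es (s : Stp V E) : (es s).length = s.length := by simp [es]

lemma head?_append_left {α : Type*} {l l' : List α} (h : l ≠ []) :
    (l ++ l').head? = l.head? := by
  cases l with
  | nil => exact absurd rfl h
  | cons a t => rfl

lemma getLast?_append_right {α : Type*} {l l' : List α} (h : l' ≠ []) :
    (l ++ l').getLast? = l'.getLast? := by
  rw [List.getLast?_append]
  cases hl : l'.getLast? with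
  | none => exact absurd (List.getLast?_eq_none_iff.1 hl) h
  | some a => rfl

lemma jn_zero_ne {c : E → C} {A B : List E} {e f : E} (h : jn c A B = 0)
    (he : A.getLast? = some e) (hf : B.head? = some f) : c e ≠ c f := by
  intro hc
  have : jn c A B = 1 := by
    unfold jn
    rw [if_pos ⟨e, by simp [he], f, by simp [hf], hc⟩]
  omega

lemma jn_one_eq {c : E → C} {A B : List E} {e f : E} (h : jn c A B = 1)
    (he : A.getLast? = some e) (hf : B.head? = some f) : c e = c f := by
  by_contra hc
  have : jn c A B = 0 := by
    unfold jn
    rw [if_neg]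
    rintro ⟨e', he', f', hf', hc'⟩
    simp [he] at he'
    simp [hf] at hf'
    exact hc (he' ▸ hf' ▸ hc')
  omega

lemma jn_zero_of_ne {c : E → C} {A B : List E} {e f : E}
    (he : A.getLast? = some e) (hf : B.head? = some f) (hc : c e ≠ c f) : jn c A B = 0 := by
  unfold jn
  rw [if_neg]
  rintro ⟨e', he', f', hf', hc'⟩
  simp [he] at he'
  simp [hf] at hf'
  exact hc (he' ▸ hf' ▸ hc')

lemma jn_zero_of_right {c : E → C} {A B : List E} {f : E}
    (hf : B.head? = some f) (hc : ∀ e, A.getLast? = some e → c e ≠ c f) : jn c A B = 0 := by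
  unfold jn
  rw [if_neg]
  rintro ⟨e', he', f', hf', hc'⟩
  simp [hf] at hf'
  exact hc e' (by simpa using he') (hf' ▸ hc')

/-! ### Core notions -/

variable (G : Multigraph V E) (c : E → C)

/-- A rooted cycle in list form. -/
def LCyc (v : V) (s : Stp V E) : Prop :=
  LW G v s ∧ endV v s = v ∧ s ≠ [] ∧ (s.map Prod.snd).Nodup ∧ (es s).Nodup

/-- A rooted alternating cycle in list form. -/
def AltC (v : V) (s : Stp V E) : Prop :=
  LCyc G v s ∧ cN c (es s) = 0 ∧ jn c (es s) (es s) = 0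

/-- An admissible rooted cycle: no cusp at the root, first color different from `α`. -/
def RC (v : V) (α : C) (s : Stp V E) : Prop :=
  LCyc G v s ∧ (∀ e, (es s).head? = some e → c e ≠ α) ∧ jn c (es s) (es s) = 0

/-- An escape path from `(v, α)` to `u`, arriving with color `τ`: a vertex-simple
cusp-free path whose first edge color differs from `α`. -/
def Esc (v : V) (α : C) (s : Stp V E) (u : V) (τ : C) : Prop :=
  LW G v s ∧ s ≠ [] ∧ (vs v s).Nodup ∧ cN c (es s) = 0 ∧
  (∀ e, (es s).head? = some e → c e ≠ α) ∧ endV v s = u ∧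
  (∃ e, (es s).getLast? = some e ∧ c e = τ)

/-- Reachable set of a pair. -/
def RS (v : V) (α : C) : Set V := {x | ∃ s τ, Esc G c v α s x τ}

/-- Splitting vertex (list form): every rooted cycle at `v` has equal first/last colors. -/
def Split (v : V) : Prop :=
  ∀ s e f, LCyc G v s → (es s).head? = some e → (es s).getLast? = some f → c e = c f

end YeoAux

namespace YeoAux

open List Multigraph

open scoped Classical

variable {V E C : Type}

lemma vs_getD_zero (v : V) (s : Stp V E) : (vs v s).getD 0 v = v := rfl

lemma vs_getD_succ (v : V) (s : Stp V E) (j : ℕ) :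
    (vs v s).getD (j + 1) v = (s.map Prod.snd).getD j v := rfl

lemma endV_eq_getD {v : V} {s : Stp V E} (h : s ≠ []) :
    endV v s = (s.map Prod.snd).getD (s.length - 1) v := by
  have hM : s.map Prod.snd ≠ [] := by simpa using h
  have hlen : 0 < s.length := List.length_pos_iff.2 h
  rw [List.getD_eq_getElem _ _ (by simp; omega)]
  show (s.map Prod.snd).getLastD v = _
  rw [List.getLastD_eq_getLast?, List.getLast?_eq_getLast hM, Option.getD_some,
    List.getLast_eq_getElem]
  simp

/-- Packaging a list walk as a `Walk`. -/
noncomputable def mkWalk (G : Multigraph V E) (v : V) (s : Stp V E) (e₀ : E) (hlw : LW G v s) :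
    G.Walk where
  len := s.length
  vert := fun i => (vs v s).getD i.1 v
  edge := fun i => (es s).getD i.1 e₀
  incs := by
    intro i hi w
    have h2 := hlw.inc_get i (by omega) w
    simp only
    rw [List.getD_eq_getElem (vs v s) _ (by simp; omega),
      List.getD_eq_getElem (vs v s) _ (by simp; omega),
      List.getD_eq_getElem (es s) _ (by simp; omega)]
    simpa [es] using h2

@[simp] lemma mkWalk_len {G : Multigraph V E} (v : V) (s : Stp V E) (e₀ : E) (hlw : LW G v s) :
    (mkWalk G v s e₀ hlw).len = s.length := rfl

@[simp] lemma mkWalk_vert {G : Multigraph V E} (v : V) (s : Stp V E) (e₀ : E) (hlw : LW G v s)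
    (i : Fin (s.length + 1)) : (mkWalk G v s e₀ hlw).vert i = (vs v s).getD i.1 v := rfl

@[simp] lemma mkWalk_edge {G : Multigraph V E} (v : V) (s : Stp V E) (e₀ : E) (hlw : LW G v s)
    (i : Fin s.length) : (mkWalk G v s e₀ hlw).edge i = (es s).getD i.1 e₀ := rfl

/-- Building a `Walk` out of an alternating list cycle; contradiction with `hno`. -/
lemma altC_false {G : Multigraph V E} {c : E → C}
    (hno : ¬ ∃ ω : G.Walk, ω.IsAlternatingCycle c)
    {v : V} {s : Stp V E} (h : AltC G c v s) : False := by
  obtain ⟨⟨hlw, hend, hne, hndv, hnde⟩, hcn, hjn⟩ := h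
  apply hno
  have hslen : 0 < s.length := List.length_pos_iff.2 hne
  have hesne : es s ≠ [] := by simpa [es] using hne
  set e₀ : E := (es s).head hesne with he₀
  have hlenvs : (vs v s).length = s.length + 1 := by simp
  have hlenes : (es s).length = s.length := by simp
  have hlenM : (s.map Prod.snd).length = s.length := by simp
  have hMinj : ∀ i j, i < s.length → j < s.length →
      (s.map Prod.snd).getD i v = (s.map Prod.snd).getD j v → i = j := by
    intro i j hi hj hEq
    rw [List.getD_eq_getElem _ _ (by omega), List.getD_eq_getElem _ _ (by omega)] at hEq
    exact (hndv.getElem_inj_iff).1 hEq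
  have hlastM : (s.map Prod.snd).getD (s.length - 1) v = v := by
    rw [← endV_eq_getD hne]; exact hend
  refine ⟨mkWalk G v s e₀ hlw, ⟨⟨?_, ?_⟩, ?_, by simpa using hslen⟩, ?_, ?_⟩
  · -- edge injectivity
    intro i j hi hj hEq
    have hi' : i < s.length := hi
    have hj' : j < s.length := hj
    change (es s).getD i e₀ = (es s).getD j e₀ at hEq
    rw [List.getD_eq_getElem _ _ (by omega), List.getD_eq_getElem _ _ (by omega)] at hEq
    exact (hnde.getElem_inj_iff).1 hEq
  · -- vertex near-injectivity
    intro i j hi hj hij hEq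
    have hi' : i < s.length + 1 := hi
    have hj' : j < s.length + 1 := hj
    change (vs v s).getD i v = (vs v s).getD j v at hEq
    show i = 0 ∧ j = s.length
    cases i with
    | zero =>
      cases j with
      | zero => omega
      | succ j' =>
        refine ⟨rfl, ?_⟩
        rw [vs_getD_zero, vs_getD_succ] at hEq
        have h3 : (s.map Prod.snd).getD j' v = (s.map Prod.snd).getD (s.length - 1) v := by
          rw [hlastM, ← hEq]
        have h4 := hMinj j' (s.length - 1) (by omega) (by omega) h3
        omega
    | succ i' =>
      cases j with
      | zero => omega
      | succ j' =>
        exfalso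
        rw [vs_getD_succ, vs_getD_succ] at hEq
        have h4 := hMinj i' j' (by omega) (by omega) hEq
        omega
  · -- closed
    show (mkWalk G v s e₀ hlw).vert _ = (mkWalk G v s e₀ hlw).vert _
    show (vs v s).getD 0 v = (vs v s).getD s.length v
    rw [vs_getD_zero, show s.length = (s.length - 1) + 1 by omega, vs_getD_succ, hlastM]
  · -- internal alternation
    intro i hi
    have hi' : i + 1 < s.length := hi
    show c ((es s).getD i e₀) ≠ c ((es s).getD (i + 1) e₀)
    rw [List.getD_eq_getElem (es s) _ (by omega), List.getD_eq_getElem (es s) _ (by omega)]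
    have h5 := cN_zero_ne hcn i (by omega)
    simpa using h5
  · -- wrap
    intro h0
    have h0' : 0 < s.length := h0
    simp only [mkWalk_len, mkWalk_edge]
    rw [List.getD_eq_getElem (es s) _ (by omega), List.getD_eq_getElem (es s) _ (by omega)]
    have hL : (es s).getLast? = some ((es s)[s.length-1]'(by omega)) := by
      rw [List.getLast?_eq_getLast hesne, List.getLast_eq_getElem]
      congr 1
      simp [es]
    have hH : (es s).head? = some ((es s)[0]'(by omega)) := by
      rw [List.head?_eq_head hesne, List.head_eq_getElem]
    have h6 := jn_zero_ne hjn hL hH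
    simpa using h6

/-- Tail of a walk. -/
def wtail {G : Multigraph V E} (p : G.Walk) (h : 0 < p.len) : G.Walk where
  len := p.len - 1
  vert := fun i => p.vert ⟨i.1 + 1, by have := i.2; omega⟩
  edge := fun i => p.edge ⟨i.1 + 1, by have := i.2; omega⟩
  incs := by
    intro i hi w
    have := p.incs (i + 1) (by omega) w
    convert this using 2

/-- Converting a `Walk` to a list walk. -/
lemma walk_to_steps {G : Multigraph V E} (p : G.Walk) :
    ∃ s : Stp V E, LW G p.src s ∧ endV p.src s = p.tgt ∧
      ∀ w ∈ vs p.src s, ∃ (i : ℕ) (h : i < p.len + 1), p.vert ⟨i, h⟩ = w := by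
  suffices H : ∀ (n : ℕ) (p : G.Walk), p.len = n → ∃ s : Stp V E, LW G p.src s ∧
      endV p.src s = p.tgt ∧
      ∀ w ∈ vs p.src s, ∃ (i : ℕ) (h : i < p.len + 1), p.vert ⟨i, h⟩ = w from
    H p.len p rfl
  intro n
  induction n with
  | zero =>
    intro p hlen
    refine ⟨[], trivial, ?_, ?_⟩
    · show p.src = p.tgt
      unfold Walk.src Walk.tgt
      congr 1
      exact Fin.ext (by omega)
    · intro w hw
      simp [vs] at hw
      exact ⟨0, by omega, hw.symm⟩
  | succ n ih =>
    intro p hlen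
    have hpos : 0 < p.len := by omega
    obtain ⟨s', h1, h2, h3⟩ := ih (wtail p hpos) (by simp [wtail]; omega)
    have hsrc : (wtail p hpos).src = p.vert ⟨1, by omega⟩ := rfl
    refine ⟨(p.edge ⟨0, hpos⟩, p.vert ⟨1, by omega⟩) :: s', ⟨?_, ?_⟩, ?_, ?_⟩
    · intro w
      exact p.incs 0 hpos w
    · rw [← hsrc]; exact h1
    · rw [endV_cons, ← hsrc, h2]
      show (wtail p hpos).vert _ = _
      unfold wtail Walk.tgt
      simp only
      congr 1
      exact Fin.ext (by simp; omega)
    · intro w hw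
      rcases List.mem_cons.1 hw with rfl | hw'
      · exact ⟨0, by omega, rfl⟩
      · rw [← hsrc] at hw'
        obtain ⟨i, hi, hvi⟩ := h3 w hw'
        refine ⟨i + 1, by simp [wtail] at hi; omega, ?_⟩
        rw [← hvi]
        rfl

end YeoAux

namespace YeoAux

open List Multigraph

open scoped Classical

variable {V E C : Type}

lemma inc_char {G : Multigraph V E} {e : E} {x y : V} (hx : G.inc e x) (hy : G.inc e y)
    (hxy : x ≠ y) : ∀ w, G.inc e w ↔ w = x ∨ w = y := by
  obtain ⟨a, b, hab, hch⟩ := G.exists_two e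
  intro w
  rw [hch]
  rcases (hch x).1 hx with rfl | rfl <;> rcases (hch y).1 hy with rfl | rfl <;> tauto

lemma not_mem_es {G : Multigraph V E} {a v : V} {s : Stp V E} (h : LW G a s)
    (hav : ∀ w ∈ vs a s, w ≠ v) {g : E} (hg : G.inc g v) : g ∉ es s := by
  intro hmem
  obtain ⟨st, hst, rfl⟩ : ∃ st ∈ s, st.1 = g := by simpa [es] using hmem
  exact hav v (h.mem_of_inc hst hg) rfl

/-- A splitting vertex satisfies the conclusion of Yeo's theorem. -/
lemma split_conclusion {G : Multigraph V E} {c : E → C} {v : V} (hsp : Split G c v)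
    (e f : E) (a b : V) (hev : G.inc e v) (hfv : G.inc f v)
    (hea : G.inc e a) (hav : a ≠ v) (hfb : G.inc f b) (hbv : b ≠ v)
    (hreach : G.ReachAvoiding v a b) : c e = c f := by
  by_cases hef : e = f
  · rw [hef]
  obtain ⟨p, hsrc, htgt, havoid⟩ := hreach
  obtain ⟨s₀, hlw₀, hend₀, hmem₀⟩ := walk_to_steps p
  rw [hsrc] at hlw₀ hend₀ hmem₀
  rw [htgt] at hend₀
  have hsne : ∀ w ∈ vs a s₀, w ≠ v := by
    intro w hw
    obtain ⟨i, hi, hvi⟩ := hmem₀ w hw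
    rw [← hvi]
    exact havoid i hi
  obtain ⟨t, hlwt, hendt, hndt, hsubt⟩ := extract_simple s₀.length s₀ a le_rfl hlw₀
  rw [hend₀] at hendt
  have htv : ∀ w ∈ vs a t, w ≠ v := fun w hw => hsne w (hsubt w hw)
  have hche : ∀ w, G.inc e w ↔ w = v ∨ w = a := inc_char hev hea (Ne.symm hav)
  have hchf : ∀ w, G.inc f w ↔ w = b ∨ w = v := inc_char hfb hfv hbv
  set cyc : Stp V E := (e, a) :: (t ++ [(f, v)]) with hcyc
  have hlwc : LW G v cyc := by
    refine ⟨hche, ?_⟩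
    rw [LW_append]
    exact ⟨hlwt, by rw [hendt]; exact ⟨hchf, trivial⟩⟩
  have hendc : endV v cyc = v := by
    rw [hcyc, endV_cons, endV_append, hendt]
    rfl
  have hndv : (cyc.map Prod.snd).Nodup := by
    have h1 : cyc.map Prod.snd = (a :: t.map Prod.snd) ++ [v] := by simp [hcyc]
    rw [h1, List.nodup_append']
    refine ⟨hndt, by simp, ?_⟩
    intro x hx hy
    exact absurd (List.mem_singleton.1 hy) (htv x hx)
  have hnde : (es cyc).Nodup := by
    have h1 : es cyc = (e :: es t) ++ [f] := by simp [hcyc, es]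
    rw [h1, List.nodup_append']
    refine ⟨?_, by simp, ?_⟩
    · rw [List.nodup_cons]
      exact ⟨not_mem_es hlwt htv hev, hlwt.es_nodup hndt⟩
    · intro x hx hy
      rw [List.mem_singleton.1 hy] at hx
      rcases List.mem_cons.1 hx with h' | h'
      · exact hef h'.symm
      · exact not_mem_es hlwt htv hfv h'
  have hcy : LCyc G v cyc := ⟨hlwc, hendc, by simp [hcyc], hndv, hnde⟩
  refine hsp cyc e f hcy ?_ ?_
  · rfl
  · show (es ((e, a) :: (t ++ [(f, v)]))).getLast? = some f
    have h1 : es ((e, a) :: (t ++ [(f, v)])) = (e :: es t) ++ [f] := by simp [es]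
    rw [h1, getLast?_append_right (by simp)]
    rfl

end YeoAux

namespace YeoAux

open List Multigraph

open scoped Classical

variable {V E C : Type}

lemma cN_reverse (c : E → C) (l : List E) : cN c l.reverse = cN c l := by
  induction l with
  | nil => simp
  | cons e l ih =>
    rw [List.reverse_cons, cN_append, ih, show e :: l = [e] ++ l from rfl, cN_append]
    have : jn c l.reverse [e] = jn c [e] l := by
      unfold jn
      rw [List.getLast?_reverse]
      rcases l.head? with _ | f <;> simp
      simp [eq_comm]
    rw [this]
    simp [cN]
    omega

lemma jn_append_right (c : E → C) {Y : List E} (X : List E) (Z : List E) (hY : Y ≠ []) :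
    jn c X (Y ++ Z) = jn c X Y := by
  unfold jn
  rw [head?_append_left hY]

lemma jn_append_left (c : E → C) (X : List E) {Y : List E} (Z : List E) (hY : Y ≠ []) :
    jn c (X ++ Y) Z = jn c Y Z := by
  unfold jn
  rw [getLast?_append_right hY]

lemma endV_eq_getLast {a : V} {s : Stp V E} (h : s ≠ []) :
    endV a s = (s.map Prod.snd).getLast (by simpa using h) := by
  show (s.map Prod.snd).getLastD a = _
  rw [List.getLastD_eq_getLast?, List.getLast?_eq_getLast (by simpa using h)]
  rfl

lemma map_snd_eq_dropLast {a : V} {s : Stp V E} (h : s ≠ []) :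
    s.map Prod.snd = (s.map Prod.snd).dropLast ++ [endV a s] := by
  rw [endV_eq_getLast h, List.dropLast_append_getLast]

lemma map_snd_rev {a : V} {s : Stp V E} (h : s ≠ []) :
    (rev a s).map Prod.snd = (s.map Prod.snd).dropLast.reverse ++ [a] := by
  have h1 : vs (endV a s) (rev a s) = (vs a s).reverse := vs_rev a s
  have h2 : (vs a s).reverse = (s.map Prod.snd).reverse ++ [a] := by
    simp [vs]
  rw [h2] at h1
  have h3 : (s.map Prod.snd).reverse =
      endV a s :: (s.map Prod.snd).dropLast.reverse := by
    conv_lhs => rw [map_snd_eq_dropLast (a := a) h]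
    simp
  rw [h3] at h1
  have h4 : vs (endV a s) (rev a s) = endV a s :: (rev a s).map Prod.snd := rfl
  rw [h4] at h1
  simpa using h1

lemma es_ne_nil {s : Stp V E} (h : s ≠ []) : es s ≠ [] := by
  simpa [es] using h

lemma ne_nil_of_es {s : Stp V E} {l : List E} (h : es s = l) (hl : l ≠ []) : s ≠ [] := by
  rintro rfl
  exact hl (by simpa using h.symm)

/-- All incident vertices of an edge of a walk lie on the walk. -/
lemma LW.inc_all_mem {G : Multigraph V E} {a : V} {s : Stp V E} (h : LW G a s)
    {g : E} (hg : g ∈ es s) : ∀ w, G.inc g w → w ∈ vs a s := by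
  intro w hw
  obtain ⟨st, hst, rfl⟩ : ∃ st ∈ s, st.1 = g := by simpa [es] using hg
  exact h.mem_of_inc hst hw

/-- If every edge in `Γ` has all endpoints in `T`, and the walk `r`'s internal
vertices avoid `T`, then a step of `r` carrying an edge of `Γ` must be the unique
step of `r`, and the start of `r` lies in `T`. -/
lemma step_in_edgeset {G : Multigraph V E} {Γ : E → Prop} {T : V → Prop}
    (hΓ : ∀ g, Γ g → ∀ w, G.inc g w → T w) :
    ∀ (r : Stp V E) (a : V), LW G a r → (∀ y ∈ (r.map Prod.snd).dropLast, ¬ T y) →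
      ∀ st ∈ r, Γ st.1 → r = [st] ∧ T a := by
  intro r
  induction r with
  | nil => intro a _ _ st hst; simp at hst
  | cons st' r' ih =>
    intro a hlw hint st hst hΓst
    have hcase := List.mem_cons.1 hst
    have hr'nil : r' = [] → st = st' ∧ r' = [] := by
      intro h; rcases hcase with rfl | h2
      · exact ⟨rfl, h⟩
      · rw [h] at h2; simp at h2
    by_cases hr' : r' = []
    · obtain ⟨rfl, rfl⟩ := hr'nil hr'
      exact ⟨rfl, hΓ st.1 hΓst a ((hlw.1 a).2 (Or.inl rfl))⟩
    · exfalso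
      have hdl : ((st' :: r').map Prod.snd).dropLast =
          st'.2 :: (r'.map Prod.snd).dropLast := by
        rw [List.map_cons, List.dropLast_cons_of_ne_nil (by simpa using hr')]
      have hst'2 : ¬ T st'.2 := by
        apply hint
        rw [hdl]
        simp
      rcases hcase with rfl | h2
      · exact hst'2 (hΓ st.1 hΓst st.2 ((hlw.1 st.2).2 (Or.inr rfl)))
      · obtain ⟨_, hT⟩ := ih st'.2 hlw.2
          (fun y hy => hint y (by rw [hdl]; exact List.mem_cons_of_mem _ hy)) st h2 hΓst
        exact hst'2 hT

end YeoAux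

namespace YeoAux

open List Multigraph

open scoped Classical

variable {V E C : Type}

lemma claimS {G : Multigraph V E} {c : E → C}
    (hA : ∀ (v : V) (s : Stp V E), ¬ AltC G c v s)
    (hRC : ∀ (v : V) (α : C), ∃ s, RC G c v α s ∧
      ∀ s', RC G c v α s' → cN c (es s) ≤ cN c (es s'))
    (v : V) (α : C) :
    ∃ (u : V) (β : C) (p : Stp V E), Esc G c v α p u β ∧
      ∀ (x : V) (τ : C) (q : Stp V E), Esc G c u β q x τ →
        ∀ w ∈ q.map Prod.snd, w ∉ vs v p := by
  obtain ⟨s, hs, hmin⟩ := hRC v α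
  obtain ⟨⟨hlw, hend, hne, hndv, hnde⟩, hhead, hroot⟩ := hs
  have hApos : 0 < cN c (es s) := by
    rcases Nat.eq_zero_or_pos (cN c (es s)) with h0 | h
    · exact absurd ⟨⟨hlw, hend, hne, hndv, hnde⟩, h0, hroot⟩ (hA v s)
    · exact h
  obtain ⟨A, B, hAB, hAne, hBne, hcA, hjAB⟩ := cN_pos_split hApos
  obtain ⟨s₁, s₂, rfl, hes1, hes2⟩ := split_of_es_eq hAB
  have hs1ne : s₁ ≠ [] := ne_nil_of_es hes1 hAne
  have hs2ne : s₂ ≠ [] := ne_nil_of_es hes2 hBne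
  have hesne1 : es s₁ ≠ [] := es_ne_nil hs1ne
  have hesne2 : es s₂ ≠ [] := es_ne_nil hs2ne
  set u := endV v s₁ with hu
  -- walks
  have hlw1 : LW G v s₁ := (LW_append.1 hlw).1
  have hlw2 : LW G u s₂ := (LW_append.1 hlw).2
  have hend2 : endV u s₂ = v := by rw [hu, ← endV_append]; exact hend
  -- edge names
  set eA := (es s₁).getLast hesne1 with heA
  set fB := (es s₂).head hesne2 with hfB
  set fA := (es s₁).head hesne1 with hfA
  set eL := (es s₂).getLast hesne2 with heL
  have hL1 : (es s₁).getLast? = some eA := List.getLast?_eq_getLast hesne1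
  have hH2 : (es s₂).head? = some fB := List.head?_eq_head hesne2
  have hH1 : (es s₁).head? = some fA := List.head?_eq_head hesne1
  have hL2 : (es s₂).getLast? = some eL := List.getLast?_eq_getLast hesne2
  set β := c eA with hβ
  have hcA1 : cN c (es s₁) = 0 := by rw [hes1]; exact hcA
  have hjn12 : jn c (es s₁) (es s₂) = 1 := by rw [hes1, hes2]; exact hjAB
  have hfBβ : c fB = β := (jn_one_eq hjn12 hL1 hH2).symm
  -- head / last of the full cycle
  have hheads : (es (s₁ ++ s₂)).head? = some fA := by
    rw [es_append, head?_append_left hesne1]; exact hH1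
  have hlasts : (es (s₁ ++ s₂)).getLast? = some eL := by
    rw [es_append, getLast?_append_right hesne2]; exact hL2
  have hfAα : c fA ≠ α := hhead fA hheads
  have hrootne : c eL ≠ c fA := jn_zero_ne hroot hlasts hheads
  -- vertex structure
  have hndv' : (s₁.map Prod.snd ++ s₂.map Prod.snd).Nodup := by
    rw [← List.map_append]; exact hndv
  have hnd1 : (s₁.map Prod.snd).Nodup := (List.nodup_append'.1 hndv').1
  have hnd2 : (s₂.map Prod.snd).Nodup := (List.nodup_append'.1 hndv').2.1
  have hdisj12 : (s₁.map Prod.snd).Disjoint (s₂.map Prod.snd) := (List.nodup_append'.1 hndv').2.2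
  have huin1 : u ∈ s₁.map Prod.snd := endV_mem hs1ne
  have hvin2 : v ∈ s₂.map Prod.snd := hend2 ▸ endV_mem hs2ne
  have hvnotin1 : v ∉ s₁.map Prod.snd := fun h => hdisj12 h hvin2
  have hunotin2 : u ∉ s₂.map Prod.snd := fun h => hdisj12 huin1 h
  have hnds1 : (vs v s₁).Nodup := List.nodup_cons.2 ⟨hvnotin1, hnd1⟩
  have hnds2 : (vs u s₂).Nodup := List.nodup_cons.2 ⟨hunotin2, hnd2⟩
  have hzuV : u ≠ v := fun h => hvnotin1 (h ▸ huin1)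
  -- edge nodups
  have hnde' : (es s₁ ++ es s₂).Nodup := by rw [← es_append]; exact hnde
  have hnde1 : (es s₁).Nodup := (List.nodup_append'.1 hnde').1
  have hnde2 : (es s₂).Nodup := (List.nodup_append'.1 hnde').2.1
  have hedisj12 : (es s₁).Disjoint (es s₂) := (List.nodup_append'.1 hnde').2.2
  -- the escape path
  have hhead1 : ∀ e, (es s₁).head? = some e → c e ≠ α := by
    intro e he
    rw [hH1] at he
    cases he
    exact hfAα
  have hesc : Esc G c v α s₁ u β :=
    ⟨hlw1, hs1ne, hnds1, hcA1, hhead1, rfl, ⟨eA, hL1, rfl⟩⟩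
  refine ⟨u, β, s₁, hesc, ?_⟩
  intro x τ q hq w hw hwin
  obtain ⟨hlwq, hqne, hndq, hcq, hheadq, hendq, _⟩ := hq
  have hsubvs : vs v s₁ ⊆ vs v (s₁ ++ s₂) := by
    rw [vs_append]
    exact fun y hy => List.mem_append_left _ hy
  have hhit : ∃ y ∈ q.map Prod.snd, y ∈ vs v (s₁ ++ s₂) := ⟨w, hw, hsubvs hwin⟩
  obtain ⟨q₁, q₂, rfl, hq1ne, hzin, hint⟩ := first_hit (a := u) (· ∈ vs v (s₁ ++ s₂)) hhit
  set z := endV u q₁ with hz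
  -- q₁ properties
  have hlwq1 : LW G u q₁ := (LW_append.1 hlwq).1
  have hndq1 : (vs u q₁).Nodup := by
    have h2 := hndq
    rw [vs_append, List.nodup_append'] at h2
    exact h2.1
  have hq1esne : es q₁ ≠ [] := es_ne_nil hq1ne
  have hcq1 : cN c (es q₁) = 0 := by
    rw [es_append] at hcq
    exact (cN_append_zero hcq).1
  have hheadq1 : ∀ e, (es q₁).head? = some e → c e ≠ β := by
    intro e he
    exact hheadq e (by rw [es_append, head?_append_left hq1esne]; exact he)
  set eQ := (es q₁).getLast hq1esne with heQ
  set fQ := (es q₁).head hq1esne with hfQ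
  have hLQ : (es q₁).getLast? = some eQ := List.getLast?_eq_getLast hq1esne
  have hHQ : (es q₁).head? = some fQ := List.head?_eq_head hq1esne
  set τ₁ := c eQ with hτ₁
  have hfQβ : c fQ ≠ β := hheadq1 fQ hHQ
  have hu_nmq : u ∉ q₁.map Prod.snd := by
    have h2 := List.nodup_cons.1 hndq1
    exact h2.1
  have hndmq : (q₁.map Prod.snd).Nodup := (List.nodup_cons.1 hndq1).2
  have hzu : z ≠ u := by
    intro h
    exact hu_nmq (h ▸ (hz ▸ endV_mem hq1ne))
  set mqi := (q₁.map Prod.snd).dropLast with hmqi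
  have hmq_split : q₁.map Prod.snd = mqi ++ [z] := map_snd_eq_dropLast hq1ne
  have hmqi_out : ∀ y ∈ mqi, y ∉ vs v (s₁ ++ s₂) := fun y hy => hint y hy
  have hndmqi : mqi.Nodup := by
    rw [hmq_split, List.nodup_append'] at hndmq
    exact hndmq.1
  have hz_nmqi : z ∉ mqi := by
    rw [hmq_split, List.nodup_append'] at hndmq
    exact fun h => hndmq.2.2 h (by simp)
  have hu_nmqi : u ∉ mqi := fun h => hu_nmq (by rw [hmq_split]; exact List.mem_append_left _ h)
  -- reversal facts
  have hlwrev : LW G z (rev u q₁) := hlwq1.rev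
  have hendrev : endV z (rev u q₁) = u := endV_rev u q₁
  have hmrev : (rev u q₁).map Prod.snd = mqi.reverse ++ [u] := map_snd_rev hq1ne
  have hesrev : es (rev u q₁) = (es q₁).reverse := es_rev u q₁
  have hesrevne : (es q₁).reverse ≠ [] := by simpa using hq1esne
  have hrevne : rev u q₁ ≠ [] := by
    cases q₁ with
    | nil => exact absurd rfl hq1ne
    | cons st t => obtain ⟨e', b'⟩ := st; simp [rev]
  have hndesq1 : (es q₁).Nodup := hlwq1.es_nodup hndq1
  -- q₁ edges avoid the cycle edges
  have hq1disj : ∀ g ∈ es q₁, g ∉ es (s₁ ++ s₂) := by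
    intro g hgq hgs
    obtain ⟨st, hst, rfl⟩ : ∃ st ∈ q₁, st.1 = g := by simpa [es] using hgq
    obtain ⟨hq1single, _⟩ := step_in_edgeset
      (Γ := fun g' => g' ∈ es (s₁ ++ s₂)) (T := fun y => y ∈ vs v (s₁ ++ s₂))
      (fun g' hg' w' hw' => hlw.inc_all_mem hg' w' hw') q₁ u hlwq1 hint st hst hgs
    have hchar : ∀ w', G.inc st.1 w' ↔ w' = u ∨ w' = st.2 := by
      have := hlwq1
      rw [hq1single] at this
      exact this.1
    have hincu : G.inc st.1 u := (hchar u).2 (Or.inl rfl)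
    have hheadeq : (es q₁).head? = some st.1 := by rw [hq1single]; rfl
    have hstβ : c st.1 ≠ β := hheadq1 st.1 hheadeq
    rw [es_append] at hgs
    rcases List.mem_append.1 hgs with hg1 | hg2
    · have h3 := hlw1.inc_end_last hnds1 hincu hg1
      have h4 : eA = st.1 := Option.some.inj (hL1.symm.trans h3)
      exact hstβ (by rw [← h4, hβ])
    · have h3 := hlw2.inc_start_head hnds2 hincu hg2
      have h4 : fB = st.1 := Option.some.inj (hH2.symm.trans h3)
      exact hstβ (by rw [← h4]; exact hfBβ)
  -- membership of z
  have hm : cN c (es (s₁ ++ s₂)) = cN c (es s₂) + 1 := by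
    rw [es_append, cN_append, hcA1, hjn12]
    omega
  -- auxiliary membership facts
  have hvmem : v ∈ vs v (s₁ ++ s₂) := List.mem_cons_self
  have hsub1 : ∀ y ∈ s₁.map Prod.snd, y ∈ vs v (s₁ ++ s₂) := by
    intro y hy
    rw [vs_append]
    exact List.mem_append_left _ (List.mem_cons_of_mem _ hy)
  have hsub2 : ∀ y ∈ s₂.map Prod.snd, y ∈ vs v (s₁ ++ s₂) := by
    intro y hy
    rw [vs_append]
    exact List.mem_append_right _ hy
  have hmqi1 : ∀ y ∈ mqi, y ∉ s₁.map Prod.snd := fun y hy h1 => hmqi_out y hy (hsub1 y h1)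
  have hmqi2 : ∀ y ∈ mqi, y ∉ s₂.map Prod.snd := fun y hy h1 => hmqi_out y hy (hsub2 y h1)
  have hmqiv : v ∉ mqi := fun h => hmqi_out v h hvmem
  have hceAfQ : c eA ≠ c fQ := by
    intro hEq
    exact hfQβ (by rw [hβ, hEq])
  by_cases hzv : z = v
  · -- CASE B: the escape returns to the root
    by_cases hτA : τ₁ = c fA
    · -- B2: replace s₁ by the reversed escape: fewer cusps
      have hlwrev' : LW G v (rev u q₁) := by rw [← hzv]; exact hlwrev
      have hendrev' : endV v (rev u q₁) = u := by rw [← hzv]; exact hendrev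
      have hlcy : LCyc G v (rev u q₁ ++ s₂) := by
        refine ⟨?_, ?_, ?_, ?_, ?_⟩
        · rw [LW_append, hendrev']
          exact ⟨hlwrev', hlw2⟩
        · rw [endV_append, hendrev']
          exact hend2
        · intro hnil
          exact hrevne (List.append_eq_nil_iff.1 hnil).1
        · rw [List.map_append, hmrev, List.nodup_append']
          refine ⟨?_, hnd2, ?_⟩
          · rw [List.nodup_append']
            refine ⟨List.nodup_reverse.2 hndmqi, by simp, ?_⟩
            intro y hy hyu
            rw [List.mem_singleton.1 hyu] at hy
            exact hu_nmqi (List.mem_reverse.1 hy)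
          · intro y hy hy2
            rcases List.mem_append.1 hy with hy' | hy'
            · exact hmqi2 y (List.mem_reverse.1 hy') hy2
            · rw [List.mem_singleton.1 hy'] at hy2
              exact hunotin2 hy2
        · rw [es_append, hesrev, List.nodup_append']
          refine ⟨List.nodup_reverse.2 hndesq1, hnde2, ?_⟩
          intro g hg hg2
          exact hq1disj g (List.mem_reverse.1 hg) (by rw [es_append]; exact List.mem_append_right _ hg2)
      have hheadΩ : (es (rev u q₁ ++ s₂)).head? = some eQ := by
        rw [es_append, head?_append_left (by rw [hesrev]; exact hesrevne), hesrev,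
          List.head?_reverse]
        exact hLQ
      have hlastΩ : (es (rev u q₁ ++ s₂)).getLast? = some eL := by
        rw [es_append, getLast?_append_right hesne2]
        exact hL2
      have hrc : RC G c v α (rev u q₁ ++ s₂) := by
        refine ⟨hlcy, ?_, ?_⟩
        · intro e he
          rw [hheadΩ] at he
          cases he
          rw [← hτ₁, hτA]
          exact hfAα
        · refine jn_zero_of_ne hlastΩ hheadΩ ?_
          rw [← hτ₁, hτA]
          exact hrootne
      have hcnΩ : cN c (es (rev u q₁ ++ s₂)) = cN c (es s₂) := by
        rw [es_append, hesrev, cN_append, cN_reverse, hcq1,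
          jn_zero_of_ne (by rw [List.getLast?_reverse]; exact hHQ) hH2
            (fun hEq => hfQβ (by rw [hEq, hfBβ]))]
        omega
      have := hmin _ hrc
      rw [hcnΩ, hm] at this
      omega
    · -- B1: s₁ ++ q₁ is an alternating cycle
      have hlcy : LCyc G v (s₁ ++ q₁) := by
        refine ⟨?_, ?_, ?_, ?_, ?_⟩
        · rw [LW_append]
          exact ⟨hlw1, hlwq1⟩
        · rw [endV_append, ← hu, ← hz]
          exact hzv
        · intro hnil
          exact hs1ne (List.append_eq_nil_iff.1 hnil).1
        · rw [List.map_append, List.nodup_append']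
          refine ⟨hnd1, hndmq, ?_⟩
          intro y hy hy2
          rw [hmq_split] at hy2
          rcases List.mem_append.1 hy2 with hy' | hy'
          · exact hmqi1 y hy' hy
          · rw [List.mem_singleton.1 hy', hzv] at hy
            exact hvnotin1 hy
        · rw [es_append, List.nodup_append']
          refine ⟨hnde1, hndesq1, ?_⟩
          intro g hg hgq
          exact hq1disj g hgq (by rw [es_append]; exact List.mem_append_left _ hg)
      have haltc : AltC G c v (s₁ ++ q₁) := by
        refine ⟨hlcy, ?_, ?_⟩
        · rw [es_append, cN_append, hcA1, hcq1, jn_zero_of_ne hL1 hHQ hceAfQ]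
        · refine jn_zero_of_ne ?_ ?_ hτA
          · rw [es_append, getLast?_append_right hq1esne]
            exact hLQ
          · rw [es_append, head?_append_left hesne1]
            exact hH1
      exact hA v (s₁ ++ q₁) haltc
  · -- z ≠ v : z lies on s₁ or on s₂
    have hzmem : z ∈ s₁.map Prod.snd ∨ z ∈ s₂.map Prod.snd := by
      have h2 := hzin
      rw [vs_append] at h2
      rcases List.mem_append.1 h2 with h3 | h3
      · rcases List.mem_cons.1 h3 with h4 | h4
        · exact absurd h4 hzv
        · exact Or.inl h4
      · exact Or.inr h3
    rcases hzmem with hz1 | hz2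
    · -- CASE A : z on s₁
      obtain ⟨a₁, a₂, hs1eq, ha1ne, hza1, _⟩ := first_hit (a := v) (· = z) ⟨z, hz1, rfl⟩
      have ha2ne : a₂ ≠ [] := by
        intro h
        apply hzu
        have h2 : u = z := by rw [hu, hs1eq, h, List.append_nil]; exact hza1
        exact h2.symm
      have hesa1ne : es a₁ ≠ [] := es_ne_nil ha1ne
      have hesa2ne : es a₂ ≠ [] := es_ne_nil ha2ne
      have hlwa1 : LW G v a₁ := by
        have := hlw1; rw [hs1eq, LW_append] at this; exact this.1
      have hlwa2 : LW G z a₂ := by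
        have := hlw1; rw [hs1eq, LW_append, hza1] at this; exact this.2
      have hendva2 : endV z a₂ = u := by
        rw [← hza1, ← endV_append, ← hs1eq]
      have hH1a : (es a₁).head? = some fA := by
        have h2 := hH1; rwa [hs1eq, es_append, head?_append_left hesa1ne] at h2
      have hLa2 : (es a₂).getLast? = some eA := by
        have h2 := hL1; rwa [hs1eq, es_append, getLast?_append_right hesa2ne] at h2
      set eZ1 := (es a₁).getLast hesa1ne with heZ1
      set fZ2 := (es a₂).head hesa2ne with hfZ2
      have hLa1 : (es a₁).getLast? = some eZ1 := List.getLast?_eq_getLast hesa1ne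
      have hHa2 : (es a₂).head? = some fZ2 := List.head?_eq_head hesa2ne
      have hcsplit : cN c (es a₁ ++ es a₂) = 0 := by
        rw [← es_append, ← hs1eq]; exact hcA1
      obtain ⟨hca1, hjna12, hca2⟩ := cN_append_zero hcsplit
      have hneZ1fZ2 : c eZ1 ≠ c fZ2 := jn_zero_ne hjna12 hLa1 hHa2
      have hndA := hnd1
      rw [hs1eq, List.map_append, List.nodup_append'] at hndA
      obtain ⟨hndA1, hndA2, hdisjA⟩ := hndA
      have hndeA := hnde1
      rw [hs1eq, es_append, List.nodup_append'] at hndeA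
      obtain ⟨hndeA1, hndeA2, hedisjA⟩ := hndeA
      have hza1mem : z ∈ a₁.map Prod.snd := hza1 ▸ endV_mem ha1ne
      have huA2 : u ∈ a₂.map Prod.snd := hendva2 ▸ endV_mem ha2ne
      have hsubA1 : ∀ y ∈ a₁.map Prod.snd, y ∈ s₁.map Prod.snd := by
        intro y hy; rw [hs1eq, List.map_append]; exact List.mem_append_left _ hy
      have hsubA2 : ∀ y ∈ a₂.map Prod.snd, y ∈ s₁.map Prod.snd := by
        intro y hy; rw [hs1eq, List.map_append]; exact List.mem_append_right _ hy
      have hesubA1 : ∀ g ∈ es a₁, g ∈ es s₁ := by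
        intro g hg; rw [hs1eq, es_append]; exact List.mem_append_left _ hg
      have hesubA2 : ∀ g ∈ es a₂, g ∈ es s₁ := by
        intro g hg; rw [hs1eq, es_append]; exact List.mem_append_right _ hg
      have hu_nA1 : u ∉ a₁.map Prod.snd := fun h => hdisjA h huA2
      have hz_nA2 : z ∉ a₂.map Prod.snd := fun h => hdisjA hza1mem h
      by_cases hτz : τ₁ = c fZ2
      · -- A, returning color matches: surgery Ω₄ = a₁ ++ rev u q₁ ++ s₂
        have hlcy : LCyc G v (a₁ ++ (rev u q₁ ++ s₂)) := by
          refine ⟨?_, ?_, ?_, ?_, ?_⟩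
          · rw [LW_append, hza1, LW_append, hendrev]
            exact ⟨hlwa1, hlwrev, hlw2⟩
          · rw [endV_append, hza1, endV_append, hendrev]
            exact hend2
          · intro hnil
            exact ha1ne (List.append_eq_nil_iff.1 hnil).1
          · rw [List.map_append, List.map_append, hmrev, List.nodup_append']
            refine ⟨hndA1, ?_, ?_⟩
            · rw [List.nodup_append']
              refine ⟨?_, hnd2, ?_⟩
              · rw [List.nodup_append']
                refine ⟨List.nodup_reverse.2 hndmqi, by simp, ?_⟩
                intro y hy hyu
                rw [List.mem_singleton.1 hyu] at hy
                exact hu_nmqi (List.mem_reverse.1 hy)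
              · intro y hy hy2
                rcases List.mem_append.1 hy with hy' | hy'
                · exact hmqi2 y (List.mem_reverse.1 hy') hy2
                · rw [List.mem_singleton.1 hy'] at hy2
                  exact hunotin2 hy2
            · intro y hy hy2
              rcases List.mem_append.1 hy2 with hy' | hy'
              · rcases List.mem_append.1 hy' with hy'' | hy''
                · exact hmqi1 y (List.mem_reverse.1 hy'') (hsubA1 y hy)
                · rw [List.mem_singleton.1 hy''] at hy
                  exact hu_nA1 hy
              · exact hdisj12 (hsubA1 y hy) hy'
          · rw [es_append, es_append, hesrev, List.nodup_append']
            refine ⟨hndeA1, ?_, ?_⟩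
            · rw [List.nodup_append']
              refine ⟨List.nodup_reverse.2 hndesq1, hnde2, ?_⟩
              intro g hg hg2
              exact hq1disj g (List.mem_reverse.1 hg)
                (by rw [es_append]; exact List.mem_append_right _ hg2)
            · intro g hg hg2
              rcases List.mem_append.1 hg2 with hg' | hg'
              · exact hq1disj g (List.mem_reverse.1 hg')
                  (by rw [es_append]; exact List.mem_append_left _ (hesubA1 g hg))
              · exact hedisj12 (hesubA1 g hg) hg'
        have hheadΩ : (es (a₁ ++ (rev u q₁ ++ s₂))).head? = some fA := by
          rw [es_append, head?_append_left hesa1ne]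
          exact hH1a
        have hlastΩ : (es (a₁ ++ (rev u q₁ ++ s₂))).getLast? = some eL := by
          rw [es_append, getLast?_append_right
            (by rw [es_append]; intro h; exact hesne2 (List.append_eq_nil_iff.1 h).2),
            es_append, getLast?_append_right hesne2]
          exact hL2
        have hrc : RC G c v α (a₁ ++ (rev u q₁ ++ s₂)) := by
          refine ⟨hlcy, ?_, ?_⟩
          · intro e he
            rw [hheadΩ] at he
            cases he
            exact hfAα
          · exact jn_zero_of_ne hlastΩ hheadΩ hrootne
        have hcnΩ : cN c (es (a₁ ++ (rev u q₁ ++ s₂))) = cN c (es s₂) := by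
          rw [es_append, es_append, hesrev, cN_append, hca1,
            jn_append_right c _ _ hesrevne,
            jn_zero_of_ne hLa1 (by rw [List.head?_reverse]; exact hLQ)
              (by intro hEq; apply hneZ1fZ2; rw [hEq, ← hτ₁]; exact hτz),
            cN_append, cN_reverse, hcq1,
            jn_zero_of_ne (by rw [List.getLast?_reverse]; exact hHQ) hH2
              (fun hEq => hfQβ (by rw [hEq, hfBβ]))]
          omega
        have := hmin _ hrc
        rw [hcnΩ, hm] at this
        omega
      · -- A, mismatch: a₂ ++ q₁ is an alternating cycle rooted at z
        have hlcy : LCyc G z (a₂ ++ q₁) := by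
          refine ⟨?_, ?_, ?_, ?_, ?_⟩
          · rw [LW_append, hendva2]
            exact ⟨hlwa2, hlwq1⟩
          · rw [endV_append, hendva2, ← hz]
          · intro hnil
            exact ha2ne (List.append_eq_nil_iff.1 hnil).1
          · rw [List.map_append, List.nodup_append']
            refine ⟨hndA2, hndmq, ?_⟩
            intro y hy hy2
            rw [hmq_split] at hy2
            rcases List.mem_append.1 hy2 with hy' | hy'
            · exact hmqi1 y hy' (hsubA2 y hy)
            · rw [List.mem_singleton.1 hy'] at hy
              exact hz_nA2 hy
          · rw [es_append, List.nodup_append']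
            refine ⟨hndeA2, hndesq1, ?_⟩
            intro g hg hgq
            exact hq1disj g hgq
              (by rw [es_append]; exact List.mem_append_left _ (hesubA2 g hg))
        have haltc : AltC G c z (a₂ ++ q₁) := by
          refine ⟨hlcy, ?_, ?_⟩
          · rw [es_append, cN_append, hca2, hcq1, jn_zero_of_ne hLa2 hHQ hceAfQ]
          · refine jn_zero_of_ne ?_ ?_ hτz
            · rw [es_append, getLast?_append_right hq1esne]
              exact hLQ
            · rw [es_append, head?_append_left hesa2ne]
              exact hHa2
        exact hA z (a₂ ++ q₁) haltc
    · -- CASE C : z on s₂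
      obtain ⟨b₁, b₂, hs2eq, hb1ne, hzb1, _⟩ := first_hit (a := u) (· = z) ⟨z, hz2, rfl⟩
      have hb2ne : b₂ ≠ [] := by
        intro h
        apply hzv
        have h2 := hend2
        rw [hs2eq, h, List.append_nil] at h2
        rw [← hzb1]
        exact h2
      have hesb1ne : es b₁ ≠ [] := es_ne_nil hb1ne
      have hesb2ne : es b₂ ≠ [] := es_ne_nil hb2ne
      have hlwb1 : LW G u b₁ := by
        have := hlw2; rw [hs2eq, LW_append] at this; exact this.1
      have hlwb2 : LW G z b₂ := by
        have := hlw2; rw [hs2eq, LW_append, hzb1] at this; exact this.2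
      have hendzb2 : endV z b₂ = v := by
        rw [← hzb1, ← endV_append, ← hs2eq]
        exact hend2
      have hHb1 : (es b₁).head? = some fB := by
        have h2 := hH2; rwa [hs2eq, es_append, head?_append_left hesb1ne] at h2
      have hLb2 : (es b₂).getLast? = some eL := by
        have h2 := hL2; rwa [hs2eq, es_append, getLast?_append_right hesb2ne] at h2
      set eZ1 := (es b₁).getLast hesb1ne with heZ1
      set fZ2 := (es b₂).head hesb2ne with hfZ2
      have hLb1 : (es b₁).getLast? = some eZ1 := List.getLast?_eq_getLast hesb1ne
      have hHb2 : (es b₂).head? = some fZ2 := List.head?_eq_head hesb2ne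
      have hcB : cN c (es s₂) = cN c (es b₁) + jn c (es b₁) (es b₂) + cN c (es b₂) := by
        rw [hs2eq, es_append, cN_append]
      have hndB := hnd2
      rw [hs2eq, List.map_append, List.nodup_append'] at hndB
      obtain ⟨hndB1, hndB2, hdisjB⟩ := hndB
      have hndeB := hnde2
      rw [hs2eq, es_append, List.nodup_append'] at hndeB
      obtain ⟨hndeB1, hndeB2, hedisjB⟩ := hndeB
      have hzb1mem : z ∈ b₁.map Prod.snd := hzb1 ▸ endV_mem hb1ne
      have hsubB1 : ∀ y ∈ b₁.map Prod.snd, y ∈ s₂.map Prod.snd := by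
        intro y hy; rw [hs2eq, List.map_append]; exact List.mem_append_left _ hy
      have hsubB2 : ∀ y ∈ b₂.map Prod.snd, y ∈ s₂.map Prod.snd := by
        intro y hy; rw [hs2eq, List.map_append]; exact List.mem_append_right _ hy
      have hesubB1 : ∀ g ∈ es b₁, g ∈ es s₂ := by
        intro g hg; rw [hs2eq, es_append]; exact List.mem_append_left _ hg
      have hesubB2 : ∀ g ∈ es b₂, g ∈ es s₂ := by
        intro g hg; rw [hs2eq, es_append]; exact List.mem_append_right _ hg
      have hz_nB2 : z ∉ b₂.map Prod.snd := fun h => hdisjB hzb1mem h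
      have hu_nB1 : u ∉ b₁.map Prod.snd := fun h => hunotin2 (hsubB1 u h)
      by_cases hb0 : cN c (es b₁) = 0 ∧ jn c (es b₁) (es b₂) = 0
      · by_cases hτz : τ₁ = c fZ2
        · -- C3b : b₁ ++ rev u q₁ is an alternating cycle rooted at u
          have hlcy : LCyc G u (b₁ ++ rev u q₁) := by
            refine ⟨?_, ?_, ?_, ?_, ?_⟩
            · rw [LW_append, hzb1]
              exact ⟨hlwb1, hlwrev⟩
            · rw [endV_append, hzb1]
              exact hendrev
            · intro hnil
              exact hb1ne (List.append_eq_nil_iff.1 hnil).1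
            · rw [List.map_append, hmrev, List.nodup_append']
              refine ⟨hndB1, ?_, ?_⟩
              · rw [List.nodup_append']
                refine ⟨List.nodup_reverse.2 hndmqi, by simp, ?_⟩
                intro y hy hyu
                rw [List.mem_singleton.1 hyu] at hy
                exact hu_nmqi (List.mem_reverse.1 hy)
              · intro y hy hy2
                rcases List.mem_append.1 hy2 with hy' | hy'
                · exact hmqi2 y (List.mem_reverse.1 hy') (hsubB1 y hy)
                · rw [List.mem_singleton.1 hy'] at hy
                  exact hu_nB1 hy
            · rw [es_append, hesrev, List.nodup_append']
              refine ⟨hndeB1, List.nodup_reverse.2 hndesq1, ?_⟩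
              intro g hg hg2
              exact hq1disj g (List.mem_reverse.1 hg2)
                (by rw [es_append]; exact List.mem_append_right _ (hesubB1 g hg))
          have haltc : AltC G c u (b₁ ++ rev u q₁) := by
            refine ⟨hlcy, ?_, ?_⟩
            · rw [es_append, hesrev, cN_append, hb0.1, cN_reverse, hcq1,
                jn_zero_of_ne hLb1 (by rw [List.head?_reverse]; exact hLQ)
                  (by
                    have h5 : c eZ1 ≠ c fZ2 := jn_zero_ne hb0.2 hLb1 hHb2
                    intro hEq
                    apply h5
                    rw [hEq, ← hτ₁]
                    exact hτz)]
            · refine jn_zero_of_ne (e := fQ) (f := fB) ?_ ?_ ?_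
              · rw [es_append, getLast?_append_right (by rw [hesrev]; exact hesrevne),
                  hesrev, List.getLast?_reverse]
                exact hHQ
              · rw [es_append, head?_append_left hesb1ne]
                exact hHb1
              · intro hEq
                exact hfQβ (by rw [hEq, hfBβ])
          exact hA u (b₁ ++ rev u q₁) haltc
        · -- C1 : surgery Ω₃ = s₁ ++ q₁ ++ b₂ drops at least one cusp
          have hlcy : LCyc G v (s₁ ++ (q₁ ++ b₂)) := by
            refine ⟨?_, ?_, ?_, ?_, ?_⟩
            · rw [LW_append, LW_append, ← hz]
              exact ⟨hlw1, hlwq1, hlwb2⟩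
            · rw [endV_append, endV_append, ← hz]
              exact hendzb2
            · intro hnil
              exact hs1ne (List.append_eq_nil_iff.1 hnil).1
            · rw [List.map_append, List.map_append, List.nodup_append']
              refine ⟨hnd1, ?_, ?_⟩
              · rw [List.nodup_append']
                refine ⟨hndmq, hndB2, ?_⟩
                intro y hy hy2
                rw [hmq_split] at hy
                rcases List.mem_append.1 hy with hy' | hy'
                · exact hmqi2 y hy' (hsubB2 y hy2)
                · rw [List.mem_singleton.1 hy'] at hy2
                  exact hz_nB2 hy2
              · intro y hy hy2
                rcases List.mem_append.1 hy2 with hy' | hy'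
                · rw [hmq_split] at hy'
                  rcases List.mem_append.1 hy' with hy'' | hy''
                  · exact hmqi1 y hy'' hy
                  · rw [List.mem_singleton.1 hy''] at hy
                    exact hdisj12 hy hz2
                · exact hdisj12 hy (hsubB2 y hy')
            · rw [es_append, es_append, List.nodup_append']
              refine ⟨hnde1, ?_, ?_⟩
              · rw [List.nodup_append']
                refine ⟨hndesq1, hndeB2, ?_⟩
                intro g hg hg2
                exact hq1disj g hg
                  (by rw [es_append]; exact List.mem_append_right _ (hesubB2 g hg2))
              · intro g hg hg2
                rcases List.mem_append.1 hg2 with hg' | hg'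
                · exact hq1disj g hg' (by rw [es_append]; exact List.mem_append_left _ hg)
                · exact hedisj12 hg (hesubB2 g hg')
          have hheadΩ : (es (s₁ ++ (q₁ ++ b₂))).head? = some fA := by
            rw [es_append, head?_append_left hesne1]
            exact hH1
          have hlastΩ : (es (s₁ ++ (q₁ ++ b₂))).getLast? = some eL := by
            rw [es_append, getLast?_append_right
              (by rw [es_append]; intro h; exact hesb2ne (List.append_eq_nil_iff.1 h).2),
              es_append, getLast?_append_right hesb2ne]
            exact hLb2
          have hrc : RC G c v α (s₁ ++ (q₁ ++ b₂)) := by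
            refine ⟨hlcy, ?_, ?_⟩
            · intro e he
              rw [hheadΩ] at he
              cases he
              exact hfAα
            · exact jn_zero_of_ne hlastΩ hheadΩ hrootne
          have hcnΩ : cN c (es (s₁ ++ (q₁ ++ b₂))) = cN c (es b₂) := by
            rw [es_append, es_append, cN_append, hcA1,
              jn_append_right c _ _ hq1esne,
              jn_zero_of_ne hL1 hHQ hceAfQ,
              cN_append, hcq1,
              jn_zero_of_ne hLQ hHb2 hτz]
            omega
          have := hmin _ hrc
          rw [hcnΩ, hm, hcB, hb0.1, hb0.2] at this
          omega
      · -- C2/C3a : surgery Ω₃ = s₁ ++ q₁ ++ b₂, count drops since b₁-side had a cusp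
        have hlcy : LCyc G v (s₁ ++ (q₁ ++ b₂)) := by
          refine ⟨?_, ?_, ?_, ?_, ?_⟩
          · rw [LW_append, LW_append, ← hz]
            exact ⟨hlw1, hlwq1, hlwb2⟩
          · rw [endV_append, endV_append, ← hz]
            exact hendzb2
          · intro hnil
            exact hs1ne (List.append_eq_nil_iff.1 hnil).1
          · rw [List.map_append, List.map_append, List.nodup_append']
            refine ⟨hnd1, ?_, ?_⟩
            · rw [List.nodup_append']
              refine ⟨hndmq, hndB2, ?_⟩
              intro y hy hy2
              rw [hmq_split] at hy
              rcases List.mem_append.1 hy with hy' | hy'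
              · exact hmqi2 y hy' (hsubB2 y hy2)
              · rw [List.mem_singleton.1 hy'] at hy2
                exact hz_nB2 hy2
            · intro y hy hy2
              rcases List.mem_append.1 hy2 with hy' | hy'
              · rw [hmq_split] at hy'
                rcases List.mem_append.1 hy' with hy'' | hy''
                · exact hmqi1 y hy'' hy
                · rw [List.mem_singleton.1 hy''] at hy
                  exact hdisj12 hy hz2
              · exact hdisj12 hy (hsubB2 y hy')
          · rw [es_append, es_append, List.nodup_append']
            refine ⟨hnde1, ?_, ?_⟩
            · rw [List.nodup_append']
              refine ⟨hndesq1, hndeB2, ?_⟩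
              intro g hg hg2
              exact hq1disj g hg
                (by rw [es_append]; exact List.mem_append_right _ (hesubB2 g hg2))
            · intro g hg hg2
              rcases List.mem_append.1 hg2 with hg' | hg'
              · exact hq1disj g hg' (by rw [es_append]; exact List.mem_append_left _ hg)
              · exact hedisj12 hg (hesubB2 g hg')
        have hheadΩ : (es (s₁ ++ (q₁ ++ b₂))).head? = some fA := by
          rw [es_append, head?_append_left hesne1]
          exact hH1
        have hlastΩ : (es (s₁ ++ (q₁ ++ b₂))).getLast? = some eL := by
          rw [es_append, getLast?_append_right
            (by rw [es_append]; intro h; exact hesb2ne (List.append_eq_nil_iff.1 h).2),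
            es_append, getLast?_append_right hesb2ne]
          exact hLb2
        have hrc : RC G c v α (s₁ ++ (q₁ ++ b₂)) := by
          refine ⟨hlcy, ?_, ?_⟩
          · intro e he
            rw [hheadΩ] at he
            cases he
            exact hfAα
          · exact jn_zero_of_ne hlastΩ hheadΩ hrootne
        have hcnΩ : cN c (es (s₁ ++ (q₁ ++ b₂))) ≤ cN c (es b₂) + 1 := by
          rw [es_append, es_append, cN_append, hcA1,
            jn_append_right c _ _ hq1esne,
            jn_zero_of_ne hL1 hHQ hceAfQ,
            cN_append, hcq1]
          have := jn_le_one c (es q₁) (es b₂)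
          omega
        have hb0' : 1 ≤ cN c (es b₁) + jn c (es b₁) (es b₂) := by
          rcases Nat.eq_zero_or_pos (cN c (es b₁)) with h1 | h1
          · rcases Nat.eq_zero_or_pos (jn c (es b₁) (es b₂)) with h2 | h2
            · exact absurd ⟨h1, h2⟩ hb0
            · omega
          · omega
        have := hmin _ hrc
        rw [hm, hcB] at this
        omega

end YeoAux

namespace YeoAux

open List Multigraph

open scoped Classical

variable {V E C : Type}

lemma LCyc.rev {G : Multigraph V E} {v : V} {s : Stp V E} (h : LCyc G v s) :
    LCyc G v (YeoAux.rev v s) := by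
  obtain ⟨hlw, hend, hne, hndv, hnde⟩ := h
  refine ⟨?_, ?_, ?_, ?_, ?_⟩
  · have h2 := hlw.rev; rwa [hend] at h2
  · have h2 := endV_rev v s; rwa [hend] at h2
  · cases s with
    | nil => exact absurd rfl hne
    | cons st t => obtain ⟨e', b'⟩ := st; simp [YeoAux.rev]
  · rw [map_snd_rev hne]
    have h2 : s.map Prod.snd = (s.map Prod.snd).dropLast ++ [v] := by
      have h3 := map_snd_eq_dropLast (a := v) hne; rwa [hend] at h3
    rw [h2, List.nodup_append'] at hndv
    rw [List.nodup_append']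
    exact ⟨List.nodup_reverse.2 hndv.1, by simp,
      fun y hy hy2 => hndv.2.2 (List.mem_reverse.1 hy) hy2⟩
  · rw [es_rev]; exact List.nodup_reverse.2 hnde

lemma exists_RC {G : Multigraph V E} {c : E → C}
    (hns : ∀ v : V, ∃ s e f, LCyc G v s ∧ (es s).head? = some e ∧
      (es s).getLast? = some f ∧ c e ≠ c f) (v : V) (α : C) : ∃ s, RC G c v α s := by
  obtain ⟨s, e, f, hcy, hH, hL, hef⟩ := hns v
  by_cases hα : c e = α
  · refine ⟨YeoAux.rev v s, hcy.rev, ?_, ?_⟩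
    · intro e' he'
      rw [es_rev, List.head?_reverse, hL] at he'
      cases Option.some.inj he'
      intro hc
      exact hef (by rw [hα, hc])
    · refine jn_zero_of_ne (e := e) (f := f) ?_ ?_ hef
      · rw [es_rev, List.getLast?_reverse]; exact hH
      · rw [es_rev, List.head?_reverse]; exact hL
  · refine ⟨s, hcy, ?_, jn_zero_of_ne hL hH (Ne.symm hef)⟩
    intro e' he'
    cases Option.some.inj (hH.symm.trans he')
    exact hα

lemma exists_min_RC {G : Multigraph V E} {c : E → C} {v : V} {α : C}
    (h : ∃ s, RC G c v α s) :
    ∃ s, RC G c v α s ∧ ∀ s', RC G c v α s' → cN c (es s) ≤ cN c (es s') := by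
  have hN : {n | ∃ s, RC G c v α s ∧ cN c (es s) = n}.Nonempty := by
    obtain ⟨s, hs⟩ := h; exact ⟨_, s, hs, rfl⟩
  obtain ⟨s, hs, hn⟩ := Nat.sInf_mem hN
  exact ⟨s, hs, fun s' hs' => by rw [hn]; exact Nat.sInf_le ⟨s', hs', rfl⟩⟩

lemma descend {G : Multigraph V E} {c : E → C}
    (hA : ∀ (v : V) (s : Stp V E), ¬ AltC G c v s)
    (hRC : ∀ (v : V) (α : C), ∃ s, RC G c v α s ∧
      ∀ s', RC G c v α s' → cN c (es s) ≤ cN c (es s'))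
    (v : V) (α : C) :
    ∃ (u : V) (β : C), u ∈ RS G c v α ∧ RS G c u β ⊆ RS G c v α ∧ u ∉ RS G c u β := by
  obtain ⟨u, β, p, hesc, htri⟩ := claimS hA hRC v α
  refine ⟨u, β, ⟨p, β, hesc⟩, ?_, ?_⟩
  · rintro x ⟨q, τ, hq⟩
    obtain ⟨hlwp, hpne, hndp, hcp, hheadp, hendp, ep, hLp, hcep⟩ := hesc
    obtain ⟨hlwq, hqne, hndq, hcq, hheadq, hendq, eq', hLq, hceq⟩ := hq
    have hpesne : es p ≠ [] := es_ne_nil hpne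
    have hqesne : es q ≠ [] := es_ne_nil hqne
    have hdisj : ∀ y ∈ q.map Prod.snd, y ∉ vs v p :=
      htri x τ q ⟨hlwq, hqne, hndq, hcq, hheadq, hendq, eq', hLq, hceq⟩
    refine ⟨p ++ q, τ, ?_, ?_, ?_, ?_, ?_, ?_, ?_⟩
    · rw [LW_append, hendp]
      exact ⟨hlwp, hlwq⟩
    · intro h; exact hpne (List.append_eq_nil_iff.1 h).1
    · rw [vs_append, List.nodup_append']
      refine ⟨hndp, (List.nodup_cons.1 hndq).2, ?_⟩
      intro y hy hy2
      exact hdisj y hy2 hy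
    · rw [es_append, cN_append, hcp]
      have hfq : (es q).head? = some ((es q).head hqesne) := List.head?_eq_head hqesne
      have hne2 : c ep ≠ c ((es q).head hqesne) := by
        intro hEq
        exact hheadq _ hfq (by rw [← hEq, hcep])
      rw [jn_zero_of_ne hLp hfq hne2, hcq]
    · intro e he
      rw [es_append, head?_append_left hpesne] at he
      exact hheadp e he
    · rw [endV_append, hendp]
      exact hendq
    · refine ⟨eq', ?_, hceq⟩
      rw [es_append, getLast?_append_right hqesne]
      exact hLq
  · rintro ⟨q, τ, hq⟩
    obtain ⟨hlwq, hqne, hndq, _, _, hendq, _⟩ := hq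
    have : u ∈ q.map Prod.snd := hendq ▸ endV_mem hqne
    exact (List.nodup_cons.1 hndq).1 this

lemma machine {G : Multigraph V E} {c : E → C} [Fintype V]
    (hno : ¬ ∃ ω : G.Walk, ω.IsAlternatingCycle c) (v₀ : V) (α₀ : C)
    (hns : ∀ v : V, ∃ s e f, LCyc G v s ∧ (es s).head? = some e ∧
      (es s).getLast? = some f ∧ c e ≠ c f) : False := by
  have hA : ∀ (v : V) (s : Stp V E), ¬ AltC G c v s := fun v s h => altC_false hno h
  have hRC : ∀ (v : V) (α : C), ∃ s, RC G c v α s ∧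
      ∀ s', RC G c v α s' → cN c (es s) ≤ cN c (es s') :=
    fun v α => exists_min_RC (exists_RC hns v α)
  have key : ∀ (n : ℕ) (v : V) (α : C), (RS G c v α).ncard ≤ n → False := by
    intro n
    induction n with
    | zero =>
      intro v α hle
      obtain ⟨u, β, hu, _, _⟩ := descend hA hRC v α
      have hfin : (RS G c v α).Finite := Set.toFinite _
      have : RS G c v α = ∅ := by
        rw [← Set.ncard_eq_zero hfin]
        omega
      rw [this] at hu
      exact hu
    | succ n ih =>
      intro v α hle
      obtain ⟨u, β, hu, hsub, hnotin⟩ := descend hA hRC v α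
      have hss : RS G c u β ⊂ RS G c v α := by
        refine ⟨hsub, fun h => hnotin (h hu)⟩
      have hlt : (RS G c u β).ncard < (RS G c v α).ncard :=
        Set.ncard_lt_ncard hss (Set.toFinite _)
      exact ih u β (by omega)
  exact key _ v₀ α₀ le_rfl

end YeoAux
open Multigraph in
/-- **Yeo's Theorem.** -/
theorem yeo
    {V E C : Type} [Fintype V] [Fintype E] [Nonempty V]
    (G : Multigraph V E) (c : E → C)
    (hno : ¬ ∃ ω : G.Walk, ω.IsAlternatingCycle c) :
    ∃ v : V, ∀ (e f : E) (a b : V), G.inc e v → G.inc f v →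
      G.inc e a → a ≠ v → G.inc f b → b ≠ v →
      G.ReachAvoiding v a b → c e = c f := by
  classical
  by_cases hsp : ∃ v, YeoAux.Split G c v
  · obtain ⟨v, hv⟩ := hsp
    exact ⟨v, fun e f a b h1 h2 h3 h4 h5 h6 h7 =>
      YeoAux.split_conclusion hv e f a b h1 h2 h3 h4 h5 h6 h7⟩
  · exfalso
    push_neg at hsp
    have hns : ∀ v : V, ∃ s e f, YeoAux.LCyc G v s ∧ (YeoAux.es s).head? = some e ∧
        (YeoAux.es s).getLast? = some f ∧ c e ≠ c f := by
      intro v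
      have h2 := hsp v
      unfold YeoAux.Split at h2
      push_neg at h2
      obtain ⟨s, e, f, h3, h4, h5, h6⟩ := h2
      exact ⟨s, e, f, h3, h4, h5, h6⟩
    obtain ⟨v₀⟩ := ‹Nonempty V›
    obtain ⟨s0, e0, f0, _, _, _, _⟩ := hns v₀
    exact YeoAux.machine hno v₀ (c e0) hns
end

section
/- (Kotzig's Theorem) If a non-empty finite undirected loopless multigraph G has a unique perfect matching F, then G has a bridge that belongs to F. -/
/-! ### Auxiliary lemmas for Kotzig's theorem -/

namespace Multigraph

variable {V E : Type} {G : Multigraph V E}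

lemma inc_iff_two (e : E) (u w : V) (hu : G.inc e u) (hw : G.inc e w) (hne : u ≠ w) :
    ∀ x, G.inc e x ↔ x = u ∨ x = w := by
  obtain ⟨a, b, hab, h⟩ := G.exists_two e
  intro x
  rw [h] at hu hw ⊢
  rcases hu with rfl | rfl <;> rcases hw with rfl | rfl <;> tauto

lemma Walk.vcast (p : G.Walk) {a b : ℕ} {ha : a < p.len + 1} (h : a = b) :
    p.vert ⟨a, ha⟩ = p.vert ⟨b, h ▸ ha⟩ := by subst h; rfl

lemma Walk.ecast (p : G.Walk) {a b : ℕ} {ha : a < p.len} (h : a = b) :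
    p.edge ⟨a, ha⟩ = p.edge ⟨b, h ▸ ha⟩ := by subst h; rfl

lemma walk_vert_ne (p : G.Walk) (i : ℕ) (h : i < p.len) :
    p.vert ⟨i, by omega⟩ ≠ p.vert ⟨i + 1, by omega⟩ := by
  obtain ⟨a, b, hab, hch⟩ := G.exists_two (p.edge ⟨i, h⟩)
  have ha := (p.incs i h a).mp ((hch a).mpr (Or.inl rfl))
  have hb := (p.incs i h b).mp ((hch b).mpr (Or.inr rfl))
  intro hv
  rw [hv] at ha hb
  rcases ha with ha | ha <;> rcases hb with hb | hb <;>
    exact hab (ha.trans hb.symm)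

lemma cycle_len_two (ω : G.Walk) (hc : ω.IsCycle) : 2 ≤ ω.len := by
  obtain ⟨hs, hcl, hlen⟩ := hc
  by_contra hl
  have h1 : ω.len = 1 := by omega
  have := walk_vert_ne ω 0 (by omega)
  apply this
  have : ω.src = ω.tgt := hcl
  unfold Walk.src Walk.tgt at this
  rw [this]
  show ω.vert ⟨ω.len, by omega⟩ = ω.vert ⟨0 + 1, by omega⟩
  exact ω.vcast (by omega)


/-- Constructor for walks from total `ℕ`-indexed data. -/
def mkWalk (G : Multigraph V E) (n : ℕ) (nv : ℕ → V) (ne : ℕ → E)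
    (h : ∀ i, i < n → ∀ w, G.inc (ne i) w ↔ (w = nv i ∨ w = nv (i + 1))) : G.Walk where
  len := n
  vert := fun i => nv i.val
  edge := fun i => ne i.val
  incs := fun i hi w => h i hi w

lemma mkWalk_len (G : Multigraph V E) (n nv ne h) : (mkWalk G n nv ne h).len = n := rfl
lemma mkWalk_vert (G : Multigraph V E) (n nv ne h) (k : ℕ) (hk : k < (mkWalk G n nv ne h).len + 1) :
    (mkWalk G n nv ne h).vert ⟨k, hk⟩ = nv k := rfl
lemma mkWalk_edge (G : Multigraph V E) (n nv ne h) (k : ℕ) (hk : k < (mkWalk G n nv ne h).len) :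
    (mkWalk G n nv ne h).edge ⟨k, hk⟩ = ne k := rfl
lemma mkWalk_src (G : Multigraph V E) (n nv ne h) : (mkWalk G n nv ne h).src = nv 0 := rfl
lemma mkWalk_tgt (G : Multigraph V E) (n nv ne h) : (mkWalk G n nv ne h).tgt = nv n := rfl

/-- Total vertex access. -/
def Walk.vtx (p : G.Walk) (k : ℕ) : V := p.vert ⟨min k p.len, by omega⟩

lemma Walk.vtx_eq (p : G.Walk) {k : ℕ} (h : k < p.len + 1) : p.vtx k = p.vert ⟨k, h⟩ :=
  p.vcast (by omega)

lemma Walk.vtx_src (p : G.Walk) : p.vtx 0 = p.src := p.vcast (by omega)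

lemma Walk.vtx_tgt (p : G.Walk) : p.vtx p.len = p.tgt := p.vcast (by omega)

/-- Total edge access. -/
def Walk.edg (p : G.Walk) (h0 : 0 < p.len) (k : ℕ) : E := p.edge ⟨min k (p.len - 1), by omega⟩

lemma Walk.edg_eq (p : G.Walk) (h0 : 0 < p.len) {k : ℕ} (h : k < p.len) :
    p.edg h0 k = p.edge ⟨k, h⟩ := p.ecast (by omega)

lemma cut_walk (p : G.Walk) (i j : ℕ) (hi : i < p.len + 1) (hj : j < p.len + 1)
    (hlt : i < j) (hveq : p.vert ⟨i, hi⟩ = p.vert ⟨j, hj⟩) :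
    ∃ q : G.Walk, q.len = p.len - (j - i) ∧ q.src = p.src ∧ q.tgt = p.tgt ∧
      (∀ (k : ℕ) (hk : k < q.len), ∃ (k' : ℕ) (hk' : k' < p.len), q.edge ⟨k, hk⟩ = p.edge ⟨k', hk'⟩) := by
  set D := j - i with hD
  have hD1 : 1 ≤ D := by omega
  have h0 : 0 < p.len := by omega
  set nv : ℕ → V := fun k => if k ≤ i then p.vtx k else p.vtx (k + D) with hnv
  set ne : ℕ → E := fun k => if k < i then p.edg h0 k else p.edg h0 (k + D) with hne
  have hincs : ∀ k, k < p.len - D → ∀ w, G.inc (ne k) w ↔ (w = nv k ∨ w = nv (k + 1)) := by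
    intro k hk w
    rcases Nat.lt_or_ge k i with hki | hki
    · rw [hne, hnv]
      simp only
      rw [if_pos hki, if_pos (by omega : k ≤ i), if_pos (by omega : k + 1 ≤ i),
        p.edg_eq h0 (by omega), p.vtx_eq (by omega : k < p.len + 1),
        p.vtx_eq (by omega : k + 1 < p.len + 1)]
      exact p.incs k (by omega) w
    rcases Nat.eq_or_lt_of_le hki with hki2 | hki2
    · rw [hne, hnv]
      simp only
      rw [if_neg (by omega), if_pos (by omega : k ≤ i), if_neg (by omega),
        p.edg_eq h0 (by omega : k + D < p.len), p.vtx_eq (by omega : k < p.len + 1),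
        p.vtx_eq (by omega : k + 1 + D < p.len + 1)]
      have h1 : k + D = j := by omega
      have h2 : k + 1 + D = j + 1 := by omega
      rw [p.ecast h1, p.vcast (show k = i by omega), hveq, p.vcast h2]
      exact p.incs j (by omega) w
    · rw [hne, hnv]
      simp only
      rw [if_neg (by omega), if_neg (by omega), if_neg (by omega),
        p.edg_eq h0 (by omega : k + D < p.len), p.vtx_eq (by omega : k + D < p.len + 1),
        p.vtx_eq (by omega : k + 1 + D < p.len + 1)]
      rw [p.vcast (show k + 1 + D = (k + D) + 1 by omega)]
      exact p.incs (k + D) (by omega) w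
  refine ⟨mkWalk G (p.len - D) nv ne hincs, rfl, ?_, ?_, ?_⟩
  · rw [mkWalk_src, hnv]
    simp only
    rw [if_pos (by omega), p.vtx_src]
  · rw [mkWalk_tgt, hnv]
    simp only
    rcases Nat.lt_or_ge (p.len - D) (i + 1) with hl | hl
    · rw [if_pos (by omega)]
      have hji : j = p.len := by omega
      rw [p.vtx_eq (by omega : p.len - D < p.len + 1), p.vcast (show p.len - D = i by omega),
        hveq]
      show p.vert ⟨j, hj⟩ = p.tgt
      rw [p.vcast hji]
      rfl
    · rw [if_neg (by omega), p.vtx_eq (by omega : p.len - D + D < p.len + 1),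
        p.vcast (show p.len - D + D = p.len by omega)]
      rfl
  · intro k hk
    have hk2 : k < p.len - D := hk
    rw [mkWalk_edge, hne]
    simp only
    rcases Nat.lt_or_ge k i with hki | hki
    · exact ⟨k, by omega, by rw [if_pos hki, p.edg_eq h0 (by omega)]⟩
    · exact ⟨k + D, by omega, by rw [if_neg (by omega), p.edg_eq h0 (by omega)]⟩

lemma exists_injective_walk :
    ∀ (n : ℕ) (p : G.Walk), p.len ≤ n →
    ∃ q : G.Walk, q.src = p.src ∧ q.tgt = p.tgt ∧
      (∀ (i j : ℕ) (hi : i < q.len + 1) (hj : j < q.len + 1),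
        q.vert ⟨i, hi⟩ = q.vert ⟨j, hj⟩ → i = j) ∧
      (∀ (k : ℕ) (hk : k < q.len), ∃ (k' : ℕ) (hk' : k' < p.len), q.edge ⟨k, hk⟩ = p.edge ⟨k', hk'⟩) := by
  intro n
  induction n with
  | zero =>
    intro p hp
    exact ⟨p, rfl, rfl, fun i j hi hj _ => by omega, fun k hk => ⟨k, hk, rfl⟩⟩
  | succ n IH =>
    intro p hp
    by_cases hinj : ∀ (i j : ℕ) (hi : i < p.len + 1) (hj : j < p.len + 1),
        p.vert ⟨i, hi⟩ = p.vert ⟨j, hj⟩ → i = j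
    · exact ⟨p, rfl, rfl, hinj, fun k hk => ⟨k, hk, rfl⟩⟩
    · push_neg at hinj
      obtain ⟨i, j, hi, hj, hveq, hij⟩ := hinj
      obtain ⟨i', j', hi', hj', hlt', hveq'⟩ :
          ∃ (i' : ℕ) (j' : ℕ) (hi' : i' < p.len + 1) (hj' : j' < p.len + 1),
            i' < j' ∧ p.vert ⟨i', hi'⟩ = p.vert ⟨j', hj'⟩ := by
        rcases Nat.lt_or_ge i j with h | h
        · exact ⟨i, j, hi, hj, h, hveq⟩
        · exact ⟨j, i, hj, hi, by omega, hveq.symm⟩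
      obtain ⟨q, hql, hqs, hqt, hqe⟩ := cut_walk p i' j' hi' hj' hlt' hveq'
      have hqlen : q.len ≤ n := by omega
      obtain ⟨q2, h2s, h2t, h2inj, h2e⟩ := IH q hqlen
      refine ⟨q2, h2s.trans hqs, h2t.trans hqt, h2inj, ?_⟩
      intro k hk
      obtain ⟨k1, hk1, he1⟩ := h2e k hk
      obtain ⟨k2, hk2, he2⟩ := hqe k1 hk1
      exact ⟨k2, hk2, he1.trans he2⟩

lemma edge_inj_of_vert_inj (q : G.Walk)
    (hinj : ∀ (i j : ℕ) (hi : i < q.len + 1) (hj : j < q.len + 1),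
      q.vert ⟨i, hi⟩ = q.vert ⟨j, hj⟩ → i = j) :
    ∀ (i j : ℕ) (hi : i < q.len) (hj : j < q.len),
      q.edge ⟨i, hi⟩ = q.edge ⟨j, hj⟩ → i = j := by
  intro i j hi hj heq
  have h1 := q.incs i hi
  have h2 := q.incs j hj
  have hvi : q.vert ⟨i, by omega⟩ = q.vert ⟨j, by omega⟩ ∨
      q.vert ⟨i, by omega⟩ = q.vert ⟨j + 1, by omega⟩ := by
    have := (h1 (q.vert ⟨i, by omega⟩)).mpr (Or.inl rfl)
    rw [heq] at this
    exact (h2 _).mp this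
  have hvi1 : q.vert ⟨i + 1, by omega⟩ = q.vert ⟨j, by omega⟩ ∨
      q.vert ⟨i + 1, by omega⟩ = q.vert ⟨j + 1, by omega⟩ := by
    have := (h1 (q.vert ⟨i + 1, by omega⟩)).mpr (Or.inr rfl)
    rw [heq] at this
    exact (h2 _).mp this
  rcases hvi with h | h <;> rcases hvi1 with h' | h' <;>
    [skip; skip; skip; skip] <;>
    first
    | (have a1 := hinj _ _ _ _ h; have a2 := hinj _ _ _ _ h'; omega)

lemma exists_cycle_of_path (q : G.Walk) (e : E)
    (hinj : ∀ (i j : ℕ) (hi : i < q.len + 1) (hj : j < q.len + 1),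
      q.vert ⟨i, hi⟩ = q.vert ⟨j, hj⟩ → i = j)
    (he1 : G.inc e q.src) (he2 : G.inc e q.tgt) (hne : q.src ≠ q.tgt)
    (hept : ∀ (k : ℕ) (hk : k < q.len), q.edge ⟨k, hk⟩ ≠ e) :
    ∃ ω : G.Walk, ω.IsCycle ∧ ω.MemE e := by
  have hq0 : 0 < q.len := by
    by_contra h
    exact hne (q.vcast (by omega))
  set nv : ℕ → V := fun k => if k ≤ q.len then q.vtx k else q.vtx 0 with hnv
  set ne : ℕ → E := fun k => if h : k < q.len then q.edge ⟨k, h⟩ else e with hnedef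
  have hincs : ∀ k, k < q.len + 1 → ∀ w, G.inc (ne k) w ↔ (w = nv k ∨ w = nv (k + 1)) := by
    intro k hk w
    rcases Nat.lt_or_ge k q.len with hkl | hkl
    · rw [hnedef, hnv]
      simp only
      rw [dif_pos hkl, if_pos (by omega : k ≤ q.len), if_pos (by omega : k + 1 ≤ q.len),
        q.vtx_eq (by omega : k < q.len + 1), q.vtx_eq (by omega : k + 1 < q.len + 1)]
      exact q.incs k hkl w
    · have hkq : k = q.len := by omega
      rw [hnedef, hnv]
      simp only
      rw [dif_neg (by omega), if_pos (by omega : k ≤ q.len), if_neg (by omega),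
        q.vtx_eq (by omega : k < q.len + 1), q.vtx_src]
      have : q.vert ⟨k, by omega⟩ = q.tgt := by rw [q.vcast hkq]; rfl
      rw [this]
      exact inc_iff_two e q.tgt q.src he2 he1 (Ne.symm hne) w
  refine ⟨mkWalk G (q.len + 1) nv ne hincs, ⟨⟨?_, ?_⟩, ?_, by rw [mkWalk_len]; omega⟩, ?_⟩
  · -- edge injectivity
    intro i j hi hj heq
    rw [mkWalk_edge, mkWalk_edge, hnedef] at heq
    simp only at heq
    have hi' : i < q.len + 1 := hi
    have hj' : j < q.len + 1 := hj
    rcases Nat.lt_or_ge i q.len with hil | hil <;> rcases Nat.lt_or_ge j q.len with hjl | hjl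
    · rw [dif_pos hil, dif_pos hjl] at heq
      exact edge_inj_of_vert_inj q hinj i j hil hjl heq
    · rw [dif_pos hil, dif_neg (by omega)] at heq
      exact absurd heq (hept i hil)
    · rw [dif_neg (by omega), dif_pos hjl] at heq
      exact absurd heq.symm (hept j hjl)
    · omega
  · -- vertex condition
    intro i j hi hj hij heq
    rw [mkWalk_vert, mkWalk_vert, hnv] at heq
    simp only at heq
    have hi' : i < q.len + 1 + 1 := hi
    have hj' : j < q.len + 1 + 1 := hj
    rcases Nat.lt_or_ge j (q.len + 1) with hjl | hjl
    · rw [if_pos (by omega : i ≤ q.len), if_pos (by omega : j ≤ q.len),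
        q.vtx_eq (by omega : i < q.len + 1), q.vtx_eq (by omega : j < q.len + 1)] at heq
      have := hinj _ _ _ _ heq
      omega
    · have hje : j = q.len + 1 := by omega
      rw [if_pos (by omega : i ≤ q.len), if_neg (by omega), q.vtx_src,
        q.vtx_eq (by omega : i < q.len + 1)] at heq
      have : q.src = q.vert ⟨0, by omega⟩ := rfl
      rw [this] at heq
      have := hinj _ _ _ _ heq
      constructor
      · omega
      · rw [mkWalk_len]; omega
  · -- closed
    show Walk.src _ = Walk.tgt _
    rw [mkWalk_src, mkWalk_tgt, hnv]
    simp only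
    rw [if_pos (by omega : (0:ℕ) ≤ q.len), if_neg (by omega)]
  · -- MemE
    refine ⟨q.len, by rw [mkWalk_len]; omega, ?_⟩
    rw [mkWalk_edge, hnedef]
    simp only
    rw [dif_neg (by omega)]

lemma tail_walk (p : G.Walk) (h0 : 0 < p.len) :
    ∃ t : G.Walk, t.len = p.len - 1 ∧ t.src = p.vert ⟨1, by omega⟩ ∧ t.tgt = p.tgt ∧
      (∀ (k : ℕ) (hk : k < t.len), ∃ (hk2 : k + 1 < p.len), t.edge ⟨k, hk⟩ = p.edge ⟨k + 1, hk2⟩) := by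
  set nv : ℕ → V := fun k => p.vtx (k + 1) with hnv
  set ne : ℕ → E := fun k => p.edg h0 (k + 1) with hnedef
  have hincs : ∀ k, k < p.len - 1 → ∀ w, G.inc (ne k) w ↔ (w = nv k ∨ w = nv (k + 1)) := by
    intro k hk w
    rw [hnedef, hnv]
    simp only
    rw [p.edg_eq h0 (by omega : k + 1 < p.len), p.vtx_eq (by omega : k + 1 < p.len + 1),
      p.vtx_eq (by omega : k + 1 + 1 < p.len + 1)]
    have := p.incs (k + 1) (by omega) w
    rwa [p.vcast (show (k + 1) + 1 = k + 1 + 1 by omega)] at this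
  refine ⟨mkWalk G (p.len - 1) nv ne hincs, rfl, ?_, ?_, ?_⟩
  · rw [mkWalk_src, hnv]
    simp only
    exact p.vtx_eq (by omega)
  · rw [mkWalk_tgt, hnv]
    simp only
    rw [p.vtx_eq (by omega : p.len - 1 + 1 < p.len + 1), p.vcast (show p.len - 1 + 1 = p.len by omega)]
    rfl
  · intro k hk
    have hk' : k < p.len - 1 := hk
    refine ⟨by omega, ?_⟩
    rw [mkWalk_edge]
    show p.edg h0 (k + 1) = _
    exact p.edg_eq h0 (by omega)

lemma cons_walk (q : G.Walk) (e : E) (u : V) (h1 : G.inc e u) (h2 : G.inc e q.src)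
    (h3 : u ≠ q.src) :
    ∃ r : G.Walk, r.src = u ∧ r.tgt = q.tgt ∧
      (∀ (k : ℕ) (hk : k < r.len), r.edge ⟨k, hk⟩ = e ∨
        ∃ (k' : ℕ) (hk' : k' < q.len), r.edge ⟨k, hk⟩ = q.edge ⟨k', hk'⟩) := by
  set nv : ℕ → V := fun k => if k = 0 then u else q.vtx (k - 1) with hnv
  set ne : ℕ → E := fun k => if h : 1 ≤ k ∧ k - 1 < q.len then q.edge ⟨k - 1, h.2⟩ else e
    with hnedef
  have hincs : ∀ k, k < q.len + 1 → ∀ w, G.inc (ne k) w ↔ (w = nv k ∨ w = nv (k + 1)) := by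
    intro k hk w
    rcases Nat.eq_zero_or_pos k with rfl | hkpos
    · rw [hnedef, hnv]
      simp only
      rw [dif_neg (by omega)]
      simp only [if_pos rfl, if_neg (Nat.succ_ne_zero 0)]
      have h0 : q.vtx (0 + 1 - 1) = q.src := q.vtx_src
      rw [h0]
      exact inc_iff_two e u q.src h1 h2 h3 w
    · rw [hnedef, hnv]
      simp only
      rw [dif_pos ⟨by omega, by omega⟩, if_neg (by omega), if_neg (by omega),
        q.vtx_eq (by omega : k - 1 < q.len + 1), q.vtx_eq (by omega : k + 1 - 1 < q.len + 1)]
      have := q.incs (k - 1) (by omega) w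
      rwa [q.vcast (show (k - 1) + 1 = k + 1 - 1 by omega)] at this
  refine ⟨mkWalk G (q.len + 1) nv ne hincs, ?_, ?_, ?_⟩
  · rw [mkWalk_src, hnv]
    simp
  · rw [mkWalk_tgt, hnv]
    simp only
    rw [if_neg (by omega), show q.len + 1 - 1 = q.len by omega, q.vtx_tgt]
  · intro k hk
    have hk' : k < q.len + 1 := hk
    rw [mkWalk_edge, hnedef]
    simp only
    rcases Nat.eq_zero_or_pos k with rfl | hkpos
    · rw [dif_neg (by omega)]
      exact Or.inl rfl
    · rw [dif_pos ⟨by omega, by omega⟩]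
      exact Or.inr ⟨k - 1, by omega, rfl⟩

lemma exists_walk_pushforward {V2 E2 : Type} (G2 : Multigraph V2 E2) (π : V → V2)
    (good : E → Prop) (lift : ∀ e, good e → E2)
    (hgood : ∀ e (he : good e), ∀ w, G.inc e w → G2.inc (lift e he) (π w))
    (hcoll : ∀ e, ¬ good e → ∀ u w, G.inc e u → G.inc e w → π u = π w)
    (hsep : ∀ e (he : good e), ∀ u w, G.inc e u → G.inc e w → u ≠ w → π u ≠ π w) :
    ∀ (n : ℕ) (p : G.Walk), p.len ≤ n →
      ∃ q : G2.Walk, q.src = π p.src ∧ q.tgt = π p.tgt ∧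
        (∀ (k : ℕ) (hk : k < q.len), ∃ (k' : ℕ) (hk' : k' < p.len)
          (hg : good (p.edge ⟨k', hk'⟩)), q.edge ⟨k, hk⟩ = lift _ hg) := by
  have key : ∀ (e1 e2 : E) (he1 : good e1) (he2 : good e2), e1 = e2 → lift e1 he1 = lift e2 he2 := by
    intro e1 e2 he1 he2 h
    subst h
    rfl
  have hnil : ∀ p : G.Walk, p.len = 0 →
      ∃ q : G2.Walk, q.src = π p.src ∧ q.tgt = π p.tgt ∧
        (∀ (k : ℕ) (hk : k < q.len), ∃ (k' : ℕ) (hk' : k' < p.len)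
          (hg : good (p.edge ⟨k', hk'⟩)), q.edge ⟨k, hk⟩ = lift _ hg) := by
    intro p hp0
    refine ⟨⟨0, fun _ => π p.src, fun i => i.elim0, fun i hi => by omega⟩, rfl, ?_, ?_⟩
    · show π p.src = π p.tgt
      have : p.src = p.tgt := p.vcast (by omega)
      rw [this]
    · intro k hk
      exact absurd (show k < 0 from hk) (by omega)
  intro n
  induction n with
  | zero => intro p hp; exact hnil p (by omega)
  | succ n IH =>
    intro p hp
    rcases Nat.eq_zero_or_pos p.len with h0 | h0
    · exact hnil p h0
    obtain ⟨t, htl, hts, htt, hte⟩ := tail_walk p h0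
    obtain ⟨q', hq's, hq't, hq'e⟩ := IH t (by omega)
    have hu : G.inc (p.edge ⟨0, h0⟩) p.src := (p.incs 0 h0 _).mpr (Or.inl rfl)
    have hw : G.inc (p.edge ⟨0, h0⟩) (p.vert ⟨1, by omega⟩) :=
      (p.incs 0 h0 _).mpr (Or.inr rfl)
    have huw : p.src ≠ p.vert ⟨1, by omega⟩ := walk_vert_ne p 0 h0
    by_cases hg0 : good (p.edge ⟨0, h0⟩)
    · -- cons
      have hi1 : G2.inc (lift _ hg0) (π p.src) := hgood _ hg0 _ hu
      have hi2 : G2.inc (lift _ hg0) q'.src := by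
        rw [hq's, hts]
        exact hgood _ hg0 _ hw
      have hne2 : π p.src ≠ q'.src := by
        rw [hq's, hts]
        exact hsep _ hg0 _ _ hu hw huw
      obtain ⟨r, hrs, hrt, hre⟩ := cons_walk q' (lift _ hg0) (π p.src) hi1 hi2 hne2
      refine ⟨r, hrs, by rw [hrt, hq't, htt], ?_⟩
      intro k hk
      rcases hre k hk with h | ⟨k', hk', h⟩
      · exact ⟨0, h0, hg0, h⟩
      · obtain ⟨k2, hk2, hg2, h2⟩ := hq'e k' hk'
        obtain ⟨hk3, hte'⟩ := hte k2 hk2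
        have hg3 := hg2
        rw [hte'] at hg3
        exact ⟨k2 + 1, hk3, hg3, by rw [h, h2]; exact key _ _ hg2 hg3 hte'⟩
    · -- skip
      have hπ : π p.src = π (p.vert ⟨1, by omega⟩) := hcoll _ hg0 _ _ hu hw
      refine ⟨q', by rw [hq's, hts, ← hπ], by rw [hq't, htt], ?_⟩
      intro k hk
      obtain ⟨k2, hk2, hg2, h2⟩ := hq'e k hk
      obtain ⟨hk3, hte'⟩ := hte k2 hk2
      have hg3 := hg2
      rw [hte'] at hg3
      exact ⟨k2 + 1, hk3, hg3, by rw [h2]; exact key _ _ hg2 hg3 hte'⟩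

lemma exists_walk_avoid (ω : G.Walk) (hc : ω.IsCycle) (m : ℕ) (hm : m < ω.len) :
    ∃ p : G.Walk,
      (∀ (k : ℕ) (hk : k < p.len), p.edge ⟨k, hk⟩ ≠ ω.edge ⟨m, hm⟩) ∧
      p.src = ω.vert ⟨m + 1, by omega⟩ ∧ p.tgt = ω.vert ⟨m, by omega⟩ := by
  have hL2 := cycle_len_two ω hc
  obtain ⟨⟨hse, hsv⟩, hcl, hlen⟩ := hc
  have hclosed : ω.vert ⟨0, by omega⟩ = ω.vert ⟨ω.len, by omega⟩ := hcl
  have hmlt : ∀ i : ℕ, (m + 1 + i) % ω.len < ω.len := fun i => Nat.mod_lt _ (by omega)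
  refine ⟨⟨ω.len - 1,
    fun i => ω.vert ⟨(m + 1 + i.val) % ω.len, by have := hmlt i.val; omega⟩,
    fun i => ω.edge ⟨(m + 1 + i.val) % ω.len, hmlt i.val⟩, ?_⟩, ?_, ?_, ?_⟩
  · intro i h w
    show G.inc (ω.edge ⟨(m + 1 + i) % ω.len, hmlt i⟩) w ↔
      (w = ω.vert ⟨(m + 1 + i) % ω.len, by have := hmlt i; omega⟩ ∨
       w = ω.vert ⟨(m + 1 + (i + 1)) % ω.len, by have := hmlt (i+1); omega⟩)
    set r := (m + 1 + i) % ω.len with hr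
    have hrL : r < ω.len := hmlt i
    have key : (m + 1 + (i + 1)) % ω.len = (r + 1) % ω.len := by
      conv_lhs => rw [show m + 1 + (i + 1) = (m + 1 + i) + 1 by omega,
        Nat.add_mod (m + 1 + i) 1 ω.len, ← hr, Nat.mod_eq_of_lt (show 1 < ω.len by omega)]
    have h3 : ω.vert ⟨(m + 1 + (i + 1)) % ω.len, by have := hmlt (i+1); omega⟩
        = ω.vert ⟨r + 1, by omega⟩ := by
      rcases Nat.lt_or_ge (r + 1) ω.len with hrl | hrl
      · exact ω.vcast (by rw [key]; exact Nat.mod_eq_of_lt hrl)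
      · have hrL1 : r + 1 = ω.len := by omega
        have e1 : ω.vert ⟨(m + 1 + (i + 1)) % ω.len, by have := hmlt (i+1); omega⟩
            = ω.vert ⟨0, by omega⟩ := ω.vcast (by rw [key, hrL1, Nat.mod_self])
        rw [e1, hclosed]
        exact ω.vcast hrL1.symm
    rw [h3]
    exact ω.incs r hrL w
  · intro k hk
    have hk' : k < ω.len - 1 := hk
    show ω.edge ⟨(m + 1 + k) % ω.len, hmlt k⟩ ≠ ω.edge ⟨m, hm⟩
    intro he
    have := hse _ _ _ _ he
    have h2L : m + 1 + k < 2 * ω.len := by omega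
    rcases Nat.lt_or_ge (m + 1 + k) ω.len with hl | hl
    · rw [Nat.mod_eq_of_lt hl] at this; omega
    · rw [Nat.mod_eq_sub_mod hl, Nat.mod_eq_of_lt (by omega)] at this; omega
  · show ω.vert ⟨(m + 1 + 0) % ω.len, by have := hmlt 0; omega⟩ = ω.vert ⟨m + 1, by omega⟩
    rcases Nat.lt_or_ge (m + 1) ω.len with hl | hl
    · exact ω.vcast (by rw [show m + 1 + 0 = m + 1 by omega]; exact Nat.mod_eq_of_lt hl)
    · have hm1 : m + 1 = ω.len := by omega
      have e1 : ω.vert ⟨(m + 1 + 0) % ω.len, by have := hmlt 0; omega⟩ = ω.vert ⟨0, by omega⟩ :=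
        ω.vcast (by rw [show m + 1 + 0 = m + 1 by omega, hm1, Nat.mod_self])
      rw [e1, hclosed]
      exact ω.vcast hm1.symm
  · show ω.vert ⟨(m + 1 + (ω.len - 1)) % ω.len, by have := hmlt (ω.len - 1); omega⟩
        = ω.vert ⟨m, by omega⟩
    refine ω.vcast ?_
    rw [show m + 1 + (ω.len - 1) = m + ω.len by omega, Nat.add_mod_right]
    exact Nat.mod_eq_of_lt hm

lemma exists_second_edge (ω : G.Walk) (hc : ω.IsCycle) (m : ℕ) (hm : m < ω.len)
    (v : V) (hv : G.inc (ω.edge ⟨m, hm⟩) v) : ∃ g, g ≠ ω.edge ⟨m, hm⟩ ∧ G.inc g v := by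
  have hL2 := cycle_len_two ω hc
  obtain ⟨⟨hse, hsv⟩, hcl, hlen⟩ := hc
  have hclosed : ω.vert ⟨0, by omega⟩ = ω.vert ⟨ω.len, by omega⟩ := hcl
  have hv2 := (ω.incs m hm v).mp hv
  rcases hv2 with hv2 | hv2
  · rcases Nat.eq_zero_or_pos m with rfl | hm0
    · refine ⟨ω.edge ⟨ω.len - 1, by omega⟩, ?_, ?_⟩
      · intro h
        have := hse _ _ _ _ h
        omega
      · have := (ω.incs (ω.len - 1) (by omega) v)
        rw [this]
        right
        rw [hv2, hclosed]
        exact ω.vcast (by omega)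
    · refine ⟨ω.edge ⟨m - 1, by omega⟩, ?_, ?_⟩
      · intro h
        have := hse _ _ _ _ h
        omega
      · rw [ω.incs (m - 1) (by omega) v]
        right
        rw [hv2]
        exact ω.vcast (by omega)
  · rcases Nat.lt_or_ge (m + 1) ω.len with hm1 | hm1
    · refine ⟨ω.edge ⟨m + 1, hm1⟩, ?_, ?_⟩
      · intro h
        have := hse _ _ _ _ h
        omega
      · rw [ω.incs (m + 1) hm1 v]
        left
        exact hv2
    · refine ⟨ω.edge ⟨0, by omega⟩, ?_, ?_⟩
      · intro h
        have := hse _ _ _ _ h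
        omega
      · rw [ω.incs 0 (by omega) v]
        left
        rw [hv2, ω.vcast (show m + 1 = ω.len by omega)]
        exact hclosed.symm

end Multigraph

open Multigraph in
theorem kotzig_aux : ∀ (n : ℕ) (V E : Type) (_ : Fintype V) (_ : Fintype E) (_ : Nonempty V)
    (G : Multigraph V E) (F : Set E), Fintype.card V < n →
    G.IsPerfectMatching F → (∀ F' : Set E, G.IsPerfectMatching F' → F' = F) →
    ∃ e ∈ F, G.IsBridge e := by
  intro n
  induction n with
  | zero => intro V E _ _ _ G F hcard; omega
  | succ n IH =>
    intro V E iV iE iNe G F hcard hPM huniq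
    by_contra hnb
    push_neg at hnb
    -- partner function
    choose partner hp hu using fun v => hPM v
    have hnb' : ∀ e ∈ F, ∃ ω : G.Walk, ω.IsCycle ∧ ω.MemE e := by
      intro e he
      have h := hnb e he
      simp only [Multigraph.IsBridge, not_not] at h
      exact h
    -- second-edge function
    have hsecond : ∀ v : V, ∃ g, g ≠ partner v ∧ G.inc g v := by
      intro v
      obtain ⟨ω, hω, m, hm, hem⟩ : ∃ ω : G.Walk, ω.IsCycle ∧
          ∃ (m : ℕ) (hm : m < ω.len), ω.edge ⟨m, hm⟩ = partner v := by
        obtain ⟨ω, hω, hmem⟩ := hnb' (partner v) (hp v).1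
        exact ⟨ω, hω, hmem⟩
      have hv : G.inc (ω.edge ⟨m, hm⟩) v := by rw [hem]; exact (hp v).2
      obtain ⟨g, hg1, hg2⟩ := exists_second_edge ω hω m hm v hv
      rw [hem] at hg1
      exact ⟨g, hg1, hg2⟩
    choose sec hsec1 hsec2 using hsecond
    have hsecF : ∀ v, sec v ∉ F := fun v hin => hsec1 v (hu v _ ⟨hin, hsec2 v⟩)
    -- other endpoint
    have hothex : ∀ (e : E) (v : V), ∃ u, G.inc e v →
        (G.inc e u ∧ u ≠ v ∧ ∀ w, G.inc e w ↔ (w = v ∨ w = u)) := by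
      intro e v
      by_cases hi : G.inc e v
      · obtain ⟨a, b, hab, hch⟩ := G.exists_two e
        rcases (hch v).mp hi with rfl | rfl
        · exact ⟨b, fun _ => ⟨(hch b).mpr (Or.inr rfl), Ne.symm hab, hch⟩⟩
        · exact ⟨a, fun _ => ⟨(hch a).mpr (Or.inl rfl), hab,
            fun w => (hch w).trans or_comm⟩⟩
      · exact ⟨v, fun h => absurd h hi⟩
    choose oth hoth using hothex
    obtain ⟨v₀⟩ := iNe
    obtain ⟨x, hx0, hxs⟩ : ∃ x : ℕ → V, x 0 = v₀ ∧ ∀ k,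
        x (k + 1) = oth (if Even k then partner (x k) else sec (x k)) (x k) :=
      ⟨fun k => Nat.rec v₀ (fun k xk => oth (if Even k then partner xk else sec xk) xk) k,
        rfl, fun k => rfl⟩
    obtain ⟨Eg, hEg⟩ : ∃ Eg : ℕ → E, ∀ k,
        Eg k = if Even k then partner (x k) else sec (x k) := ⟨_, fun k => rfl⟩
    have hIncK : ∀ k, G.inc (Eg k) (x k) := by
      intro k
      rw [hEg]
      by_cases h : Even k
      · rw [if_pos h]; exact (hp (x k)).2
      · rw [if_neg h]; exact hsec2 (x k)
    have hstep : ∀ k, G.inc (Eg k) (x (k + 1)) ∧ x (k + 1) ≠ x k ∧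
        (∀ w, G.inc (Eg k) w ↔ (w = x k ∨ w = x (k + 1))) := by
      intro k
      have h1 := hoth (Eg k) (x k) (hIncK k)
      have h2 : x (k + 1) = oth (Eg k) (x k) := by rw [hxs k, hEg]
      rw [← h2] at h1
      exact ⟨h1.1, h1.2.1, h1.2.2⟩
    have hF2 : ∀ k, Eg k ∈ F ↔ k % 2 = 0 := by
      intro k
      rw [hEg]
      by_cases h : Even k
      · rw [if_pos h]
        simp [(hp (x k)).1, Nat.even_iff.mp h]
      · rw [if_neg h]
        have h2 : k % 2 = 1 := Nat.odd_iff.mp (Nat.not_even_iff_odd.mp h)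
        simp only [iff_false_intro (hsecF (x k)), false_iff]
        omega
    have hpe : ∀ k, k % 2 = 0 → partner (x k) = Eg k := by
      intro k h
      rw [hEg, if_pos (Nat.even_iff.mpr h)]
    have hpo : ∀ k, k % 2 = 0 → partner (x (k + 1)) = Eg k := by
      intro k h
      exact (hu (x (k + 1)) (Eg k) ⟨(hF2 k).mpr h, (hstep k).1⟩).symm
    -- pigeonhole
    obtain ⟨a, b, hab, hxab⟩ := Fintype.exists_ne_map_eq_of_card_lt
      (fun i : Fin (Fintype.card V + 1) => x i.val) (by rw [Fintype.card_fin]; omega)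
    obtain ⟨K, P, hKP, hxKP⟩ : ∃ K P : ℕ, K < P ∧ x K = x P := by
      rcases lt_or_gt_of_ne hab with h | h
      · exact ⟨a.val, b.val, h, hxab⟩
      · exact ⟨b.val, a.val, h, hxab.symm⟩
    -- minimal repetition distance
    have hdS : sInf {δ : ℕ | ∃ k l : ℕ, k < l ∧ l ≤ P ∧ l = k + δ ∧ x k = x l}
        ∈ {δ : ℕ | ∃ k l : ℕ, k < l ∧ l ≤ P ∧ l = k + δ ∧ x k = x l} :=
      Nat.sInf_mem ⟨P - K, K, P, hKP, le_refl P, by omega, hxKP⟩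
    set d := sInf {δ : ℕ | ∃ k l : ℕ, k < l ∧ l ≤ P ∧ l = k + δ ∧ x k = x l} with hddef
    have hmin : ∀ k l : ℕ, k < l → l ≤ P → x k = x l → d ≤ l - k := by
      intro k l h1 h2 h3
      exact Nat.sInf_le ⟨k, l, h1, h2, by omega, h3⟩
    obtain ⟨I, J, hIJ, hJP, hJd, hxIJ⟩ := hdS
    have hd1 : 1 ≤ d := by omega
    have hd2 : 2 ≤ d := by
      rcases Nat.lt_or_ge d 2 with h | h
      · exfalso
        have hJ1 : J = I + 1 := by omega
        exact (hstep I).2.1 (by rw [← hJ1]; exact hxIJ.symm)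
      · exact h
    have hinjB : ∀ k l : ℕ, I ≤ k → k < l → l < J → x k ≠ x l := by
      intro k l h1 h2 h3 heq
      have := hmin k l h2 (by omega) heq
      omega
    have hinjB' : ∀ k l : ℕ, I ≤ k → k < J → I ≤ l → l < J → x k = x l → k = l := by
      intro k l h1 h2 h3 h4 heq
      rcases Nat.lt_trichotomy k l with h | h | h
      · exact absurd heq (hinjB k l h1 h h4)
      · exact h
      · exact absurd heq.symm (hinjB l k h3 h h2)
    -- both-matching junction is impossible
    have hBF : I % 2 = 0 → J % 2 = 1 → False := by
      intro hEI hEJ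
      have hEgI : Eg I ∈ F := (hF2 I).mpr hEI
      have hEgJ1 : Eg (J - 1) ∈ F := (hF2 (J - 1)).mpr (by omega)
      have hincJ : G.inc (Eg (J - 1)) (x I) := by
        rw [hxIJ]
        have h := (hstep (J - 1)).1
        rwa [show J - 1 + 1 = J by omega] at h
      have heq : Eg I = Eg (J - 1) :=
        (hu (x I) (Eg I) ⟨hEgI, hIncK I⟩).trans (hu (x I) (Eg (J - 1)) ⟨hEgJ1, hincJ⟩).symm
      have h1 : G.inc (Eg (J - 1)) (x (I + 1)) := by rw [← heq]; exact (hstep I).1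
      rcases ((hstep (J - 1)).2.2 (x (I + 1))).mp h1 with h2 | h2
      · rcases Nat.lt_trichotomy (I + 1) (J - 1) with h | h | h
        · have := hmin (I + 1) (J - 1) h (by omega) h2
          omega
        · omega
        · omega
      · rw [show J - 1 + 1 = J by omega, ← hxIJ] at h2
        exact (hstep I).2.1 h2
    -- alternating-cycle case
    have hAlt : I % 2 = J % 2 → False := by
      intro hpar
      set B : Set V := {v | ∃ k, I ≤ k ∧ k < J ∧ x k = v} with hBdef
      have hBmem : ∀ m, I ≤ m → m ≤ J → x m ∈ B := by
        intro m h1 h2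
        rcases Nat.lt_or_ge m J with h | h
        · exact ⟨m, h1, h, rfl⟩
        · exact ⟨I, le_refl I, by omega, by rw [show m = J by omega]; exact hxIJ⟩
      have hIncPos : ∀ m k, I ≤ m → m < J → I ≤ k → k < J → G.inc (Eg m) (x k) →
          (m = k ∨ (m + 1 = k) ∨ (m + 1 = J ∧ k = I)) := by
        intro m k hm1 hm2 hk1 hk2 hinc
        rcases ((hstep m).2.2 (x k)).mp hinc with h | h
        · left; exact (hinjB' m k hm1 hm2 hk1 hk2 h.symm)
        · rcases Nat.lt_or_ge (m + 1) J with hl | hl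
          · right; left; exact (hinjB' (m + 1) k (by omega) hl hk1 hk2 h.symm)
          · have hmJ : m + 1 = J := by omega
            rw [hmJ, ← hxIJ] at h
            exact Or.inr (Or.inr ⟨hmJ, hinjB' k I hk1 hk2 (le_refl I) (by omega) h⟩)
      have hBend : ∀ m, I ≤ m → m < J → ∀ w, G.inc (Eg m) w → w ∈ B := by
        intro m h1 h2 w hw
        rcases ((hstep m).2.2 w).mp hw with h | h
        · rw [h]; exact hBmem m h1 (by omega)
        · rw [h]; exact hBmem (m + 1) (by omega) (by omega)
      have hOddPos : ∀ k, I ≤ k → k < J → ∃ mO, I ≤ mO ∧ mO < J ∧ mO % 2 = 1 ∧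
          G.inc (Eg mO) (x k) ∧
          (∀ m, I ≤ m → m < J → m % 2 = 1 → G.inc (Eg m) (x k) → m = mO) := by
        intro k hk1 hk2
        have huniqpos : ∀ m m', I ≤ m → m < J → m % 2 = 1 → G.inc (Eg m) (x k) →
            I ≤ m' → m' < J → m' % 2 = 1 → G.inc (Eg m') (x k) → m = m' := by
          intro m m' a1 a2 a3 a4 b1 b2 b3 b4
          have hm := hIncPos m k a1 a2 hk1 hk2 a4
          have hm' := hIncPos m' k b1 b2 hk1 hk2 b4
          omega
        by_cases hkodd : k % 2 = 1
        · exact ⟨k, hk1, hk2, hkodd, hIncK k,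
            fun m a1 a2 a3 a4 => huniqpos m k a1 a2 a3 a4 hk1 hk2 hkodd (hIncK k)⟩
        · by_cases hkI : k = I
          · have h1 : G.inc (Eg (J - 1)) (x k) := by
              rw [hkI, hxIJ]
              have h := (hstep (J - 1)).1
              rwa [show J - 1 + 1 = J by omega] at h
            exact ⟨J - 1, by omega, by omega, by omega, h1,
              fun m a1 a2 a3 a4 =>
                huniqpos m (J - 1) a1 a2 a3 a4 (by omega) (by omega) (by omega) h1⟩
          · have h1 : G.inc (Eg (k - 1)) (x k) := by
              have h := (hstep (k - 1)).1
              rwa [show k - 1 + 1 = k by omega] at h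
            exact ⟨k - 1, by omega, by omega, by omega, h1,
              fun m a1 a2 a3 a4 =>
                huniqpos m (k - 1) a1 a2 a3 a4 (by omega) (by omega) (by omega) h1⟩
      have hpartnerB : ∀ k, I ≤ k → k < J → ∃ mE, I ≤ mE ∧ mE < J ∧ mE % 2 = 0 ∧
          partner (x k) = Eg mE := by
        intro k hk1 hk2
        by_cases hkeven : k % 2 = 0
        · exact ⟨k, hk1, hk2, hkeven, hpe k hkeven⟩
        · by_cases hkI : k = I
          · refine ⟨J - 1, by omega, by omega, by omega, ?_⟩
            have h := hpo (J - 1) (by omega)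
            rw [show J - 1 + 1 = J by omega] at h
            rw [hkI, hxIJ]
            exact h
          · refine ⟨k - 1, by omega, by omega, by omega, ?_⟩
            have h := hpo (k - 1) (by omega)
            rwa [show k - 1 + 1 = k by omega] at h
      set cycF : Set E := {e | ∃ m, I ≤ m ∧ m < J ∧ m % 2 = 0 ∧ Eg m = e} with hcycFdef
      set cycN : Set E := {e | ∃ m, I ≤ m ∧ m < J ∧ m % 2 = 1 ∧ Eg m = e} with hcycNdef
      have hPM2 : G.IsPerfectMatching ((F \ cycF) ∪ cycN) := by
        intro v
        by_cases hvB : v ∈ B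
        · obtain ⟨k, hk1, hk2, rfl⟩ := hvB
          obtain ⟨mO, a1, a2, a3, a4, a5⟩ := hOddPos k hk1 hk2
          obtain ⟨mE, b1, b2, b3, b4⟩ := hpartnerB k hk1 hk2
          refine ⟨Eg mO, ⟨Or.inr ⟨mO, a1, a2, a3, rfl⟩, a4⟩, ?_⟩
          rintro e ⟨he, hinc⟩
          rcases he with he | he
          · exfalso
            have heq : e = partner (x k) := hu (x k) e ⟨he.1, hinc⟩
            exact he.2 (by rw [heq, b4]; exact ⟨mE, b1, b2, b3, rfl⟩)
          · obtain ⟨m, c1, c2, c3, c4⟩ := he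
            rw [← c4] at hinc ⊢
            rw [a5 m c1 c2 c3 hinc]
        · refine ⟨partner v, ⟨Or.inl ⟨(hp v).1, ?_⟩, (hp v).2⟩, ?_⟩
          · intro hcf
            obtain ⟨m, c1, c2, _, c4⟩ := hcf
            exact hvB (hBend m c1 c2 v (by rw [c4]; exact (hp v).2))
          · rintro e ⟨he, hinc⟩
            rcases he with he | he
            · exact hu v e ⟨he.1, hinc⟩
            · exfalso
              obtain ⟨m, c1, c2, _, c4⟩ := he
              exact hvB (hBend m c1 c2 v (by rw [c4]; exact hinc))
      obtain ⟨mOdd, e1, e2, e3⟩ : ∃ mOdd, I ≤ mOdd ∧ mOdd < J ∧ mOdd % 2 = 1 := by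
        by_cases hI : I % 2 = 1
        · exact ⟨I, le_refl I, by omega, hI⟩
        · exact ⟨I + 1, by omega, by omega, by omega⟩
      have hmem : Eg mOdd ∈ (F \ cycF) ∪ cycN := Or.inr ⟨mOdd, e1, e2, e3, rfl⟩
      rw [huniq _ hPM2] at hmem
      exact absurd ((hF2 mOdd).mp hmem) (by omega)
    -- blossom case
    have hBlossom : I % 2 = 1 → J % 2 = 0 → False := by
      intro hEI hEJ
      have hd3 : 3 ≤ d := by omega
      have hI1 : 1 ≤ I := by omega
      set B : Set V := {v | ∃ k, I ≤ k ∧ k < J ∧ x k = v} with hBdef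
      have htB : x I ∈ B := ⟨I, le_refl I, by omega, rfl⟩
      have hBmem : ∀ m, I ≤ m → m ≤ J → x m ∈ B := by
        intro m h1 h2
        rcases Nat.lt_or_ge m J with h | h
        · exact ⟨m, h1, h, rfl⟩
        · exact ⟨I, le_refl I, by omega, by rw [show m = J by omega]; exact hxIJ⟩
      have hBend : ∀ m, I ≤ m → m < J → ∀ w, G.inc (Eg m) w → w ∈ B := by
        intro m h1 h2 w hw
        rcases ((hstep m).2.2 w).mp hw with h | h
        · rw [h]; exact hBmem m h1 (by omega)
        · rw [h]; exact hBmem (m + 1) (by omega) (by omega)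
      -- the stem
      have hstem : partner (x I) = Eg (I - 1) := by
        have h := hpo (I - 1) (by omega)
        rwa [show I - 1 + 1 = I by omega] at h
      have hstemInc : G.inc (Eg (I - 1)) (x I) := by
        have h := (hstep (I - 1)).1
        rwa [show I - 1 + 1 = I by omega] at h
      have hyB : x (I - 1) ∉ B := by
        rintro ⟨k, hk1, hk2, hk3⟩
        have hkJ : k = J - 1 := by
          have := hmin (I - 1) k (by omega) (by omega) hk3.symm
          omega
        rw [hkJ] at hk3
        have h1 : partner (x (J - 1)) = Eg (J - 2) := by
          have h := hpo (J - 2) (by omega)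
          rwa [show J - 2 + 1 = J - 1 by omega] at h
        have h2 : partner (x (I - 1)) = Eg (I - 1) := hpe (I - 1) (by omega)
        have heq : Eg (I - 1) = Eg (J - 2) := by rw [← h2, ← h1, hk3]
        have hincI : G.inc (Eg (J - 2)) (x I) := by rw [← heq]; exact hstemInc
        rcases ((hstep (J - 2)).2.2 (x I)).mp hincI with h | h
        · rcases Nat.lt_trichotomy I (J - 2) with hc | hc | hc
          · have := hmin I (J - 2) hc (by omega) h
            omega
          · omega
          · omega
        · rw [show J - 2 + 1 = J - 1 by omega] at h
          exact hinjB I (J - 1) (le_refl I) (by omega) (by omega) h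
      -- interior vertices are matched inside B
      have hPB : ∀ u, u ∈ B → u ≠ x I → ∃ m, I ≤ m ∧ m < J ∧ partner u = Eg m := by
        rintro u ⟨k, hk1, hk2, rfl⟩ hne
        have hkI : I < k := by
          rcases Nat.eq_or_lt_of_le hk1 with h | h
          · exfalso; apply hne; rw [← h]
          · exact h
        by_cases hkeven : k % 2 = 0
        · exact ⟨k, hk1, hk2, hpe k hkeven⟩
        · refine ⟨k - 1, by omega, by omega, ?_⟩
          have h := hpo (k - 1) (by omega)
          rwa [show k - 1 + 1 = k by omega] at h
      -- the contracted graph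
      have hex2 : ∀ e : {e : E // ∃ w, G.inc e w ∧ w ∉ B}, ∃ a b : {v : V // v ∉ B ∨ v = x I},
          a ≠ b ∧ ∀ w : {v : V // v ∉ B ∨ v = x I},
            (G.inc e.val w.val ∨ (w.val = x I ∧ ∃ u ∈ B, G.inc e.val u)) ↔ (w = a ∨ w = b) := by
        intro e
        obtain ⟨a, b, hab, hch⟩ := G.exists_two e.val
        obtain ⟨w₀, hw₀i, hw₀B⟩ := e.prop
        by_cases haB : a ∈ B <;> by_cases hbB : b ∈ B
        · exfalso
          rcases (hch w₀).mp hw₀i with rfl | rfl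
          · exact hw₀B haB
          · exact hw₀B hbB
        · refine ⟨⟨x I, Or.inr rfl⟩, ⟨b, Or.inl hbB⟩, ?_, ?_⟩
          · intro hc
            exact hbB (by rw [← Subtype.mk_eq_mk.mp hc]; exact htB)
          · intro w
            constructor
            · rintro (hw | ⟨hw, _⟩)
              · rcases (hch w.val).mp hw with h | h
                · rcases w.prop with hp' | hp'
                  · exact absurd (by rw [h]; exact haB) hp'
                  · exact Or.inl (Subtype.ext hp')
                · exact Or.inr (Subtype.ext h)
              · exact Or.inl (Subtype.ext hw)
            · rintro (rfl | rfl)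
              · exact Or.inr ⟨rfl, a, haB, (hch a).mpr (Or.inl rfl)⟩
              · exact Or.inl ((hch b).mpr (Or.inr rfl))
        · refine ⟨⟨a, Or.inl haB⟩, ⟨x I, Or.inr rfl⟩, ?_, ?_⟩
          · intro hc
            exact haB (by rw [Subtype.mk_eq_mk.mp hc]; exact htB)
          · intro w
            constructor
            · rintro (hw | ⟨hw, _⟩)
              · rcases (hch w.val).mp hw with h | h
                · exact Or.inl (Subtype.ext h)
                · rcases w.prop with hp' | hp'
                  · exact absurd (by rw [h]; exact hbB) hp'
                  · exact Or.inr (Subtype.ext hp')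
              · exact Or.inr (Subtype.ext hw)
            · rintro (rfl | rfl)
              · exact Or.inl ((hch a).mpr (Or.inl rfl))
              · exact Or.inr ⟨rfl, b, hbB, (hch b).mpr (Or.inr rfl)⟩
        · refine ⟨⟨a, Or.inl haB⟩, ⟨b, Or.inl hbB⟩,
            fun hc => hab (Subtype.mk_eq_mk.mp hc), ?_⟩
          intro w
          constructor
          · rintro (hw | ⟨hw, u, huB, hui⟩)
            · rcases (hch w.val).mp hw with h | h
              · exact Or.inl (Subtype.ext h)
              · exact Or.inr (Subtype.ext h)
            · exfalso
              rcases (hch u).mp hui with rfl | rfl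
              · exact haB huB
              · exact hbB huB
          · rintro (rfl | rfl)
            · exact Or.inl ((hch a).mpr (Or.inl rfl))
            · exact Or.inl ((hch b).mpr (Or.inr rfl))
      obtain ⟨G', hG'inc⟩ : ∃ G' : Multigraph {v : V // v ∉ B ∨ v = x I}
            {e : E // ∃ w, G.inc e w ∧ w ∉ B},
          ∀ e w, G'.inc e w ↔
            (G.inc e.val w.val ∨ (w.val = x I ∧ ∃ u ∈ B, G.inc e.val u)) :=
        ⟨⟨fun e w => G.inc e.val w.val ∨ (w.val = x I ∧ ∃ u ∈ B, G.inc e.val u), hex2⟩,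
          fun e w => Iff.rfl⟩
      set F' : Set {e : E // ∃ w, G.inc e w ∧ w ∉ B} := {e | e.val ∈ F} with hF'def
      have hstemE' : ∃ w, G.inc (Eg (I - 1)) w ∧ w ∉ B := ⟨x (I - 1), hIncK (I - 1), hyB⟩
      -- F' is a perfect matching of G'
      have hPM' : G'.IsPerfectMatching F' := by
        intro v'
        rcases v'.prop with hvB | hvt
        · have hvne : v'.val ≠ x I := fun h => hvB (by rw [h]; exact htB)
          refine ⟨⟨partner v'.val, ⟨v'.val, (hp v'.val).2, hvB⟩⟩,
            ⟨(hp v'.val).1, (hG'inc _ _).mpr (Or.inl (hp v'.val).2)⟩, ?_⟩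
          rintro e ⟨heF, hinc⟩
          rcases (hG'inc _ _).mp hinc with hinc2 | ⟨hw, _⟩
          · exact Subtype.ext (hu v'.val e.val ⟨heF, hinc2⟩)
          · exact absurd hw hvne
        · refine ⟨⟨Eg (I - 1), hstemE'⟩, ⟨(hF2 (I - 1)).mpr (by omega),
            (hG'inc _ _).mpr (Or.inl (by rw [hvt]; exact hstemInc))⟩, ?_⟩
          rintro e ⟨heF, hinc⟩
          refine Subtype.ext ?_
          rcases (hG'inc _ _).mp hinc with hinc2 | ⟨_, u, huB, hui⟩
          · rw [hvt] at hinc2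
            exact (hu (x I) e.val ⟨heF, hinc2⟩).trans hstem
          · by_cases huI : u = x I
            · rw [huI] at hui
              exact (hu (x I) e.val ⟨heF, hui⟩).trans hstem
            · exfalso
              obtain ⟨m, m1, m2, m3⟩ := hPB u huB huI
              have heq2 : e.val = Eg m := (hu u e.val ⟨heF, hui⟩).trans m3
              obtain ⟨w₂, hw₂i, hw₂B⟩ := e.prop
              rw [heq2] at hw₂i
              exact hw₂B (hBend m m1 m2 w₂ hw₂i)
      -- uniqueness of F'
      have huniq' : ∀ N' : Set {e : E // ∃ w, G.inc e w ∧ w ∉ B},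
          G'.IsPerfectMatching N' → N' = F' := by
        intro N' hN'
        obtain ⟨e₀', ⟨he₀N, he₀i⟩, he₀u⟩ := hN' ⟨x I, Or.inr rfl⟩
        obtain ⟨z₀, hz₀B, hz₀i⟩ : ∃ z, z ∈ B ∧ G.inc e₀'.val z := by
          rcases (hG'inc _ _).mp he₀i with h | ⟨_, u, huB, hui⟩
          · exact ⟨x I, htB, h⟩
          · exact ⟨u, huB, hui⟩
        have hz₀u : ∀ u, u ∈ B → G.inc e₀'.val u → u = z₀ := by
          intro u huB hui
          by_contra hne
          obtain ⟨w₂, hw₂i, hw₂B⟩ := e₀'.prop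
          rcases (inc_iff_two e₀'.val u z₀ hui hz₀i hne w₂).mp hw₂i with rfl | rfl
          · exact hw₂B huB
          · exact hw₂B hz₀B
        obtain ⟨s, hs1, hs2, hs3⟩ := hz₀B
        obtain ⟨qp, hqp⟩ : ∃ qp : ℕ → ℕ, ∀ r, qp r = I + ((s - I + r) % d) :=
          ⟨_, fun r => rfl⟩
        have hqplt : ∀ r, qp r < J := by
          intro r
          rw [hqp]
          have := Nat.mod_lt (s - I + r) (y := d) (by omega)
          omega
        have hqpge : ∀ r, I ≤ qp r := by intro r; rw [hqp]; omega
        have hqp0 : qp 0 = s := by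
          rw [hqp, Nat.add_zero, Nat.mod_eq_of_lt (by omega)]
          omega
        have hqpinj : ∀ r r', r < d → r' < d → qp r = qp r' → r = r' := by
          intro r r' hr hr' heq
          rw [hqp, hqp] at heq
          have h2 : (s - I + r) % d = (s - I + r') % d := by omega
          have h3 : r % d = r' % d := Nat.ModEq.add_left_cancel' (s - I) h2
          rwa [Nat.mod_eq_of_lt hr, Nat.mod_eq_of_lt hr'] at h3
        have hqpsucc : ∀ r, x (qp r + 1) = x (qp (r + 1)) := by
          intro r
          rcases Nat.lt_or_ge ((s - I + r) % d + 1) d with hlt | hge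
          · have heq3 : qp (r + 1) = qp r + 1 := by
              rw [hqp, hqp, show s - I + (r + 1) = (s - I + r) + 1 by omega,
                Nat.add_mod (s - I + r) 1 d, Nat.mod_eq_of_lt (show 1 < d by omega),
                Nat.mod_eq_of_lt hlt]
              omega
            rw [heq3]
          · have h1 : (s - I + r) % d = d - 1 := by
              have := Nat.mod_lt (s - I + r) (y := d) (show 0 < d by omega)
              omega
            have h2 : qp r + 1 = J := by rw [hqp, h1]; omega
            have h3 : qp (r + 1) = I := by
              rw [hqp, show s - I + (r + 1) = (s - I + r) + 1 by omega,
                Nat.add_mod (s - I + r) 1 d, h1, Nat.mod_eq_of_lt (show 1 < d by omega),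
                show d - 1 + 1 = d by omega, Nat.mod_self]
              omega
            rw [h2, h3, ← hxIJ]
        set rotSet : Set E := {e | ∃ r, r % 2 = 1 ∧ r < d - 1 ∧ e = Eg (qp r)} with hrotdef
        set liftSet : Set E :=
          {e | ∃ h : (∃ w, G.inc e w ∧ w ∉ B), (⟨e, h⟩ : {e : E // ∃ w, G.inc e w ∧ w ∉ B}) ∈ N'}
          with hliftdef
        have hrotB : ∀ e ∈ rotSet, ∀ w, G.inc e w → w ∈ B := by
          rintro e ⟨r, hr1, hr2, rfl⟩ w hw
          exact hBend (qp r) (hqpge r) (hqplt r) w hw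
        have hrotend : ∀ r, r < d - 1 → ∀ w,
            G.inc (Eg (qp r)) w ↔ (w = x (qp r) ∨ w = x (qp (r + 1))) := by
          intro r hr w
          rw [(hstep (qp r)).2.2 w, hqpsucc r]
        have hNPM : G.IsPerfectMatching (liftSet ∪ rotSet) := by
          intro v
          by_cases hvB : v ∈ B
          · obtain ⟨k, hk1, hk2, rfl⟩ := hvB
            obtain ⟨rh, hrh1, hrh2⟩ : ∃ rh, rh < d ∧ qp rh = k := by
              refine ⟨(k + d - s) % d, Nat.mod_lt _ (by omega), ?_⟩
              rw [hqp, Nat.add_mod_mod, show s - I + (k + d - s) = (k - I) + d by omega,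
                Nat.add_mod_right, Nat.mod_eq_of_lt (by omega)]
              omega
            by_cases hrh0 : rh = 0
            · have hkz : x k = z₀ := by rw [← hrh2, hrh0, hqp0, hs3]
              refine ⟨e₀'.val, ⟨Or.inl ⟨e₀'.prop, he₀N⟩, by rw [hkz]; exact hz₀i⟩, ?_⟩
              rintro e ⟨he, hinc⟩
              rcases he with ⟨hEp, hmem⟩ | he
              · have hinc' : G'.inc ⟨e, hEp⟩ ⟨x I, Or.inr rfl⟩ :=
                  (hG'inc _ _).mpr (Or.inr ⟨rfl, x k, ⟨k, hk1, hk2, rfl⟩, hinc⟩)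
                exact congrArg Subtype.val (he₀u ⟨e, hEp⟩ ⟨hmem, hinc'⟩)
              · obtain ⟨r, hr1, hr2, rfl⟩ := he
                exfalso
                rcases (hrotend r hr2 (x k)).mp hinc with h | h
                · have h5 := hinjB' (qp r) k (hqpge r) (hqplt r) hk1 hk2 h.symm
                  have := hqpinj r 0 (by omega) (by omega) (by rw [h5, ← hrh2, hrh0])
                  omega
                · have h5 := hinjB' (qp (r + 1)) k (hqpge (r + 1)) (hqplt (r + 1)) hk1 hk2 h.symm
                  have := hqpinj (r + 1) 0 (by omega) (by omega) (by rw [h5, ← hrh2, hrh0])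
                  omega
            · obtain ⟨r₀, hr₀1, hr₀2, hor⟩ :
                  ∃ r₀, r₀ % 2 = 1 ∧ r₀ < d - 1 ∧ (rh = r₀ ∨ rh = r₀ + 1) := by
                by_cases hrhodd : rh % 2 = 1
                · exact ⟨rh, hrhodd, by omega, Or.inl rfl⟩
                · exact ⟨rh - 1, by omega, by omega, Or.inr (by omega)⟩
              have hincv : G.inc (Eg (qp r₀)) (x k) := by
                apply (hrotend r₀ hr₀2 (x k)).mpr
                rcases hor with h | h
                · left; rw [← hrh2, h]
                · right; rw [← hrh2, h]
              refine ⟨Eg (qp r₀), ⟨Or.inr ⟨r₀, hr₀1, hr₀2, rfl⟩, hincv⟩, ?_⟩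
              rintro e ⟨he, hinc⟩
              rcases he with ⟨hEp, hmem⟩ | he
              · exfalso
                have hinc' : G'.inc ⟨e, hEp⟩ ⟨x I, Or.inr rfl⟩ :=
                  (hG'inc _ _).mpr (Or.inr ⟨rfl, x k, ⟨k, hk1, hk2, rfl⟩, hinc⟩)
                have heq := he₀u ⟨e, hEp⟩ ⟨hmem, hinc'⟩
                have hinc₀ : G.inc e₀'.val (x k) := by
                  rw [← congrArg Subtype.val heq]; exact hinc
                have hxkz := hz₀u (x k) ⟨k, hk1, hk2, rfl⟩ hinc₀
                have hks : k = s := hinjB' k s hk1 hk2 hs1 hs2 (by rw [hxkz, hs3])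
                exact hrh0 (hqpinj rh 0 (by omega) (by omega) (by rw [hrh2, hqp0]; exact hks))
              · obtain ⟨r, hr1, hr2, rfl⟩ := he
                have hreq : rh = r ∨ rh = r + 1 := by
                  rcases (hrotend r hr2 (x k)).mp hinc with h | h
                  · left
                    have h5 := hinjB' k (qp r) hk1 hk2 (hqpge r) (hqplt r) h
                    exact hqpinj rh r (by omega) (by omega) (by rw [hrh2, h5])
                  · right
                    have h5 := hinjB' k (qp (r + 1)) hk1 hk2 (hqpge (r + 1)) (hqplt (r + 1)) h
                    exact hqpinj rh (r + 1) (by omega) (by omega) (by rw [hrh2, h5])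
                have : r = r₀ := by omega
                rw [this]
          · have hvne : v ≠ x I := fun h => hvB (by rw [h]; exact htB)
            obtain ⟨ev', ⟨hevN, hevi⟩, hevu⟩ := hN' ⟨v, Or.inl hvB⟩
            have hincv : G.inc ev'.val v := by
              rcases (hG'inc _ _).mp hevi with h | ⟨hw, _⟩
              · exact h
              · exact absurd hw hvne
            refine ⟨ev'.val, ⟨Or.inl ⟨ev'.prop, hevN⟩, hincv⟩, ?_⟩
            rintro e ⟨he, hinc⟩
            rcases he with ⟨hEp, hmem⟩ | he
            · exact congrArg Subtype.val
                (hevu ⟨e, hEp⟩ ⟨hmem, (hG'inc _ _).mpr (Or.inl hinc)⟩)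
            · exact absurd (hrotB e he v hinc) hvB
        have hNF := huniq _ hNPM
        have hsub : ∀ f' : {e : E // ∃ w, G.inc e w ∧ w ∉ B}, f' ∈ N' → f' ∈ F' := by
          intro f' hf'
          have hmem : f'.val ∈ liftSet ∪ rotSet := Or.inl ⟨f'.prop, hf'⟩
          rw [hNF] at hmem
          exact hmem
        ext f'
        constructor
        · exact hsub f'
        · intro hf'
          obtain ⟨a', b', hab', hch'⟩ := G'.exists_two f'
          obtain ⟨g', ⟨hgN, hgi⟩, hgu⟩ := hN' a'
          obtain ⟨f₂, hf₂, hf₂u⟩ := hPM' a'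
          have h1 : g' = f₂ := hf₂u g' ⟨hsub g' hgN, hgi⟩
          have h2 : f' = f₂ := hf₂u f' ⟨hf', (hch' a').mpr (Or.inl rfl)⟩
          rw [h2, ← h1]
          exact hgN
      -- apply the induction hypothesis
      haveI : DecidablePred (fun v : V => v ∉ B ∨ v = x I) := Classical.decPred _
      haveI : DecidablePred (fun e : E => ∃ w, G.inc e w ∧ w ∉ B) := Classical.decPred _
      have hcard' : Fintype.card {v : V // v ∉ B ∨ v = x I} < n := by
        have h1 : ¬ (x (I + 1) ∉ B ∨ x (I + 1) = x I) := by
          rintro (h | h)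
          · exact h ⟨I + 1, by omega, by omega, rfl⟩
          · exact (hstep I).2.1 h
        have h2 := Fintype.card_subtype_lt (p := fun v : V => v ∉ B ∨ v = x I) h1
        exact lt_of_lt_of_le h2 (Nat.lt_succ_iff.mp hcard)
      obtain ⟨h', h'F, h'br⟩ := IH _ _ inferInstance inferInstance
        ⟨⟨x I, Or.inr rfl⟩⟩ G' F' hcard' hPM' huniq'
      -- h'.val is on a cycle in G; lift the cycle to G' to contradict h'br
      obtain ⟨ω, hω, m, hm, hem⟩ : ∃ ω : G.Walk, ω.IsCycle ∧
          ∃ (m : ℕ) (hm : m < ω.len), ω.edge ⟨m, hm⟩ = h'.val := by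
        obtain ⟨ω, hω, hmem⟩ := hnb' h'.val h'F
        exact ⟨ω, hω, hmem⟩
      obtain ⟨p, hpavoid, hpsrc, hptgt⟩ := exists_walk_avoid ω hω m hm
      haveI : DecidablePred (· ∈ B) := Classical.decPred _
      obtain ⟨π, hπB, hπnB⟩ : ∃ π : V → {v : V // v ∉ B ∨ v = x I},
          (∀ v, v ∈ B → π v = ⟨x I, Or.inr rfl⟩) ∧
          (∀ v (h : v ∉ B), π v = ⟨v, Or.inl h⟩) := by
        refine ⟨fun v => if hv : v ∈ B then ⟨x I, Or.inr rfl⟩ else ⟨v, Or.inl hv⟩, ?_, ?_⟩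
        · intro v hv
          simp [hv]
        · intro v hv
          simp [hv]
      have hπinc : ∀ (e : E) (he : ∃ w, G.inc e w ∧ w ∉ B), ∀ w, G.inc e w →
          G'.inc ⟨e, he⟩ (π w) := by
        intro e he w hw
        apply (hG'inc _ _).mpr
        by_cases hwB : w ∈ B
        · rw [hπB w hwB]
          exact Or.inr ⟨rfl, w, hwB, hw⟩
        · rw [hπnB w hwB]
          exact Or.inl hw
      have hcoll : ∀ e, ¬ (∃ w, G.inc e w ∧ w ∉ B) → ∀ u w, G.inc e u → G.inc e w →
          π u = π w := by
        intro e he u w hu' hw'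
        push_neg at he
        rw [hπB u (he u hu'), hπB w (he w hw')]
      have hsep : ∀ (e : E) (he : ∃ w, G.inc e w ∧ w ∉ B), ∀ u w,
          G.inc e u → G.inc e w → u ≠ w → π u ≠ π w := by
        intro e he u w hu' hw' huw
        by_cases huB : u ∈ B <;> by_cases hwB : w ∈ B
        · exfalso
          obtain ⟨z, hz, hzB⟩ := he
          rcases (inc_iff_two e u w hu' hw' huw z).mp hz with rfl | rfl
          · exact hzB huB
          · exact hzB hwB
        · rw [hπB u huB, hπnB w hwB]
          intro hc
          exact hwB (by rw [← Subtype.mk_eq_mk.mp hc]; exact htB)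
        · rw [hπnB u huB, hπB w hwB]
          intro hc
          exact huB (by rw [Subtype.mk_eq_mk.mp hc]; exact htB)
        · rw [hπnB u huB, hπnB w hwB]
          intro hc
          exact huw (Subtype.mk_eq_mk.mp hc)
      obtain ⟨q, hqs, hqt, hqe⟩ := exists_walk_pushforward G' π _ (fun e he => ⟨e, he⟩)
        hπinc hcoll hsep p.len p (le_refl _)
      have hqavoid : ∀ (k : ℕ) (hk : k < q.len), q.edge ⟨k, hk⟩ ≠ h' := by
        intro k hk hc
        obtain ⟨k', hk', hg, heq⟩ := hqe k hk
        rw [heq] at hc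
        have hval : p.edge ⟨k', hk'⟩ = h'.val := congrArg Subtype.val hc
        exact hpavoid k' hk' (hval.trans hem.symm)
      obtain ⟨q2, h2s, h2t, h2inj, h2e⟩ := exists_injective_walk q.len q (le_refl _)
      have h2avoid : ∀ (k : ℕ) (hk : k < q2.len), q2.edge ⟨k, hk⟩ ≠ h' := by
        intro k hk hc
        obtain ⟨k', hk', heq⟩ := h2e k hk
        rw [heq] at hc
        exact hqavoid k' hk' hc
      have hincsrc : G.inc h'.val p.src := by
        rw [hpsrc, ← hem]
        exact (ω.incs m hm _).mpr (Or.inr rfl)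
      have hinctgt : G.inc h'.val p.tgt := by
        rw [hptgt, ← hem]
        exact (ω.incs m hm _).mpr (Or.inl rfl)
      have hsrcne : p.src ≠ p.tgt := by
        rw [hpsrc, hptgt]
        exact (walk_vert_ne ω m hm).symm
      have hq2src : G'.inc h' q2.src := by
        rw [h2s, hqs]
        exact hπinc h'.val h'.prop p.src hincsrc
      have hq2tgt : G'.inc h' q2.tgt := by
        rw [h2t, hqt]
        exact hπinc h'.val h'.prop p.tgt hinctgt
      have hq2ne : q2.src ≠ q2.tgt := by
        rw [h2s, h2t, hqs, hqt]
        exact hsep h'.val h'.prop p.src p.tgt hincsrc hinctgt hsrcne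
      obtain ⟨ω', hω', hmem'⟩ := exists_cycle_of_path q2 h' h2inj hq2src hq2tgt hq2ne h2avoid
      exact h'br ⟨ω', hω', hmem'⟩
    rcases Nat.lt_or_ge (I % 2) 1 with hI2 | hI2 <;> rcases Nat.lt_or_ge (J % 2) 1 with hJ2 | hJ2
    · exact hAlt (by omega)
    · exact hBF (by omega) (by omega)
    · exact hBlossom (by omega) (by omega)
    · exact hAlt (by omega)

open Multigraph in
/-- **Kotzig's Theorem.** -/
theorem kotzig
    {V E : Type} [Fintype V] [Fintype E] [Nonempty V]
    (G : Multigraph V E) (F : Set E)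
    (hF : G.IsPerfectMatching F)
    (huniq : ∀ F' : Set E, G.IsPerfectMatching F' → F' = F) :
    ∃ e ∈ F, G.IsBridge e :=
  kotzig_aux (Fintype.card V + 1) V E ‹_› ‹_› ‹_› G F (by omega) hF huniq
end
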